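/- arXiv:2503.16229 — 9 statements merged into one kernel-verified Lean document; each statement's English description precedes it below -/
import Mathlib

section
/- Let r ≥ 3 and let L ⊂ {0,1,...,r-1}. If H is an L-intersecting r-uniform hypergraph on n vertices (every two distinct edges intersect in a number of vertices belonging to L) and n ≥ 2^r · r^3, then |H| ≤ ∏_{ℓ∈L} (n-ℓ)/(r-ℓ). -/
open Finset

/-!
Induction on `r`, writing `D(n, r, L) = ∏_{ℓ ∈ L} (n - ℓ)/(r - ℓ)`. If `T` is a nonempty set of
`k ≤ r` vertices, the link `{A \ T : T ⊆ A ∈ H}` is `(r - k)`-uniform on `n - k` vertices with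
intersection sizes `{ℓ - k : k ≤ ℓ ∈ L}`, so by induction at most `D(n, r, {ℓ ∈ L : ℓ ≥ k})`
edges contain `T`; the hypothesis `n ≥ 2^r r^3` is inherited because `2^r r^3` grows by at
least one with each increment of `r`.

If `0 ∈ L`, double counting vertex-edge incidences with these degree bounds gives the missing
factor `n / r`. Otherwise let `ℓ₁ = min L ≥ 1` and fix an edge `A₀`: every edge contains one of
the at most `2^r` subsets `T ⊆ A₀` of size `ℓ₁`. Unless `T` lies in every edge, pairwise disjoint
sets of the link of `T` number at most `r`: an edge `B` missing `T` is disjoint from one of them,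
`A \ T` say, so `B ∩ A ⊆ T`, and `|B ∩ A| ≥ ℓ₁` would force `T ⊆ B`. The union of a maximal such
family has at most `r²` vertices and meets every set of the link, and each of its vertices lies
in at most `D(n, r, L \ {ℓ₁})` of them. Altogether
`|H| ≤ 2^r r² D(n, r, L \ {ℓ₁}) ≤ (n - ℓ₁)/(r - ℓ₁) · D(n, r, L \ {ℓ₁}) = D(n, r, L)`.
-/

namespace DezaErdosFrankl

variable {α : Type*} [DecidableEq α]

def defBound (n r : ℕ) (L : Finset ℕ) : ℚ := ∏ ℓ ∈ L, ((n : ℚ) - ℓ) / ((r : ℚ) - ℓ)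

def link (H : Finset (Finset α)) (T : Finset α) : Finset (Finset α) :=
  {A ∈ H | T ⊆ A}.image (· \ T)

lemma two_pow_mul_cube_add_sub_le {a b : ℕ} (h : a ≤ b) :
    2 ^ a * a ^ 3 + (b - a) ≤ 2 ^ b * b ^ 3 := by
  induction b, h using Nat.le_induction with
  | base => simp
  | succ b hab ih =>
    have : 2 ^ b * b ^ 3 + 1 ≤ 2 ^ (b + 1) * (b + 1) ^ 3 :=
      calc 2 ^ b * b ^ 3 + 1 ≤ 2 ^ b * (b ^ 3 + 1) := by nlinarith [Nat.one_le_two_pow (n := b)]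
        _ ≤ 2 ^ (b + 1) * (b + 1) ^ 3 := by
          have : (b + 1) ^ 3 = b ^ 3 + 3 * b ^ 2 + 3 * b + 1 := by ring
          gcongr <;> omega
    omega

lemma le_two_pow_mul_cube (r : ℕ) : r ≤ 2 ^ r * r ^ 3 := by
  simpa using two_pow_mul_cube_add_sub_le (Nat.zero_le r)

lemma two_pow_mul_sq_le_div {n r ℓ : ℕ} (hn : 2 ^ r * r ^ 3 ≤ n) (hℓ : ℓ < r) :
    (2 ^ r * r ^ 2 : ℚ) ≤ ((n : ℚ) - ℓ) / ((r : ℚ) - ℓ) := by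
  have hℓ' : (ℓ : ℚ) < r := by exact_mod_cast hℓ
  have hn' : (2 : ℚ) ^ r * r ^ 3 ≤ n := by exact_mod_cast hn
  have h1 : (1 : ℚ) ≤ 2 ^ r * r ^ 2 := by
    have : r ≠ 0 := by omega
    have : 1 ≤ 2 ^ r * r ^ 2 := Nat.one_le_iff_ne_zero.2 (by positivity)
    exact_mod_cast this
  rw [le_div_iff₀ (by linarith)]
  nlinarith [mul_le_mul_of_nonneg_right h1 (Nat.cast_nonneg (α := ℚ) ℓ)]

lemma image_sub_subset_range {L : Finset ℕ} {r k : ℕ} (hL : L ⊆ range r) :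
    {ℓ ∈ L | k ≤ ℓ}.image (· - k) ⊆ range (r - k) := by
  intro m hm
  obtain ⟨ℓ, hℓ, rfl⟩ := mem_image.1 hm
  obtain ⟨hℓL, hkℓ⟩ := mem_filter.1 hℓ
  have := mem_range.1 (hL hℓL)
  exact mem_range.2 (by omega)

lemma one_le_defBound {n r : ℕ} {L : Finset ℕ} (hL : L ⊆ range r) (hrn : r ≤ n) :
    1 ≤ defBound n r L := by
  refine one_le_prod fun ℓ hℓ => ?_
  have hℓ' : (ℓ : ℚ) < r := by exact_mod_cast mem_range.1 (hL hℓ)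
  have hrn' : (r : ℚ) ≤ n := by exact_mod_cast hrn
  rw [one_le_div (by linarith)]
  linarith

lemma defBound_image_sub {n r k : ℕ} {L : Finset ℕ} (hk : ∀ ℓ ∈ L, k ≤ ℓ) (hkr : k ≤ r)
    (hrn : r ≤ n) : defBound (n - k) (r - k) (L.image (· - k)) = defBound n r L := by
  rw [defBound, prod_image fun a ha b hb hab => by have := hk a ha; have := hk b hb; omega]
  refine prod_congr rfl fun ℓ hℓ => ?_
  push_cast [hk ℓ hℓ, hkr, hkr.trans hrn]
  ring_nf

lemma filter_succ_le_eq_erase {L : Finset ℕ} {a : ℕ} (ha : ∀ ℓ ∈ L, a ≤ ℓ) :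
    {ℓ ∈ L | a + 1 ≤ ℓ} = L.erase a := by
  ext ℓ
  by_cases hℓ : ℓ ∈ L
  · simp only [mem_filter, mem_erase, hℓ, true_and, and_true]
    have := ha ℓ hℓ
    omega
  · simp [hℓ]

lemma exists_disjoint_of_card_lt {M : Finset (Finset α)}
    (hM : (M : Set (Finset α)).PairwiseDisjoint id) {B : Finset α} (h : #B < #M) :
    ∃ g ∈ M, Disjoint B g := by
  by_contra! hmeet
  have h1 : #M ≤ #(M.biUnion (B ∩ ·)) :=
    card_le_card_biUnion (hM.mono_on fun g _ => inter_subset_right)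
      fun g hg => not_disjoint_iff_nonempty_inter.1 (hmeet g hg)
  have h2 : #(M.biUnion (B ∩ ·)) ≤ #B := card_le_card (biUnion_subset.2 fun g _ => inter_subset_left)
  omega

lemma exists_hittingSet {G : Finset (Finset α)} {m s : ℕ} (hne : ∀ g ∈ G, g.Nonempty)
    (hs : ∀ g ∈ G, #g ≤ s)
    (hm : ∀ M ⊆ G, (M : Set (Finset α)).PairwiseDisjoint id → #M ≤ m) :
    ∃ U : Finset α, #U ≤ m * s ∧ ∀ g ∈ G, ¬Disjoint g U := by
  classical
  obtain ⟨M, hM, hMmax⟩ := exists_max_image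
    (G.powerset.filter fun M : Finset (Finset α) => (M : Set (Finset α)).PairwiseDisjoint id)
    card ⟨∅, by simp⟩
  rw [mem_filter, mem_powerset] at hM
  refine ⟨M.biUnion id, ?_, fun g hg hgU => ?_⟩
  · calc #(M.biUnion id) ≤ #M * s := card_biUnion_le_card_mul M id s fun g hg => hs g (hM.1 hg)
      _ ≤ m * s := Nat.mul_le_mul_right s (hm M hM.1 hM.2)
  have hgU' : ∀ j ∈ M, Disjoint g j := fun j hj => hgU.mono_right (subset_biUnion_of_mem id hj)
  have hgM : g ∉ M := fun hgM => (hne g hg).ne_empty (disjoint_self.1 (hgU' g hgM))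
  have := hMmax (insert g M) <| by
    simpa [insert_subset hg hM.1] using hM.2.insert_of_notMem hgM hgU'
  rw [card_insert_of_notMem hgM] at this
  omega

section Counting

variable {R : Type*} [Semiring R] [PartialOrder R] [IsOrderedRing R]

lemma card_le_card_mul_of_cover {β ι : Type*} [DecidableEq β] {s : Finset β} {I : Finset ι}
    {p : ι → β → Prop} [∀ i, DecidablePred (p i)] {D : R} (hcover : ∀ b ∈ s, ∃ i ∈ I, p i b)
    (hD : ∀ i ∈ I, (#{b ∈ s | p i b} : R) ≤ D) : (#s : R) ≤ #I * D := by
  have hs : #s ≤ ∑ i ∈ I, #{b ∈ s | p i b} := by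
    refine (card_le_card fun b hb => ?_).trans card_biUnion_le
    obtain ⟨i, hi, hib⟩ := hcover b hb
    exact mem_biUnion.2 ⟨i, hi, mem_filter.2 ⟨hb, hib⟩⟩
  calc (#s : R) ≤ ∑ i ∈ I, (#{b ∈ s | p i b} : R) := by exact_mod_cast Nat.mono_cast hs
    _ ≤ #I * D := by simpa using sum_le_sum hD

lemma card_mul_le_card_mul_of_degree_le {H : Finset (Finset α)} {V : Finset α} {r : ℕ} {D : R}
    (hH : (H : Set (Finset α)).Sized r) (hV : ∀ A ∈ H, A ⊆ V)
    (hD : ∀ x ∈ V, (#{A ∈ H | x ∈ A} : R) ≤ D) : (#H * r : R) ≤ #V * D := by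
  have hcount : #H * r = ∑ x ∈ V, #{A ∈ H | x ∈ A} := by
    calc #H * r = ∑ A ∈ H, #(V ∩ A) := by
          rw [sum_congr rfl fun A hA => by rw [inter_eq_right.2 (hV A hA), hH hA], sum_const,
            smul_eq_mul]
      _ = ∑ x ∈ V, #{A ∈ H | x ∈ A} := by
          simp_rw [← filter_mem_eq_inter, card_eq_sum_ones, sum_filter]
          exact sum_comm
  calc (#H * r : R) = ∑ x ∈ V, (#{A ∈ H | x ∈ A} : R) := by exact_mod_cast congrArg Nat.cast hcount
    _ ≤ #V * D := by simpa using sum_le_sum hD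

end Counting

section Link

variable {H : Finset (Finset α)} {T : Finset α}

lemma mem_link {g : Finset α} : g ∈ link H T ↔ ∃ A ∈ H, T ⊆ A ∧ A \ T = g := by
  simp [link, and_assoc]

lemma card_link (H : Finset (Finset α)) (T : Finset α) : #(link H T) = #{A ∈ H | T ⊆ A} :=
  card_image_of_injOn <| (superset_injOn_sdiff T).mono fun _ hA => (mem_filter.1 hA).2

lemma disjoint_of_mem_link {g : Finset α} (hg : g ∈ link H T) : Disjoint g T := by
  obtain ⟨A, -, -, rfl⟩ := mem_link.1 hg
  exact sdiff_disjoint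

lemma sized_link {r : ℕ} (hH : (H : Set (Finset α)).Sized r) :
    (link H T : Set (Finset α)).Sized (r - #T) := by
  intro g hg
  obtain ⟨A, hA, hTA, rfl⟩ := mem_link.1 hg
  rw [card_sdiff_of_subset hTA, hH hA]

lemma link_subset_sdiff {V : Finset α} (hV : ∀ A ∈ H, A ⊆ V) : ∀ g ∈ link H T, g ⊆ V \ T := by
  intro g hg
  obtain ⟨A, hA, -, rfl⟩ := mem_link.1 hg
  exact sdiff_subset_sdiff (hV A hA) le_rfl

lemma pairwise_link {L : Finset ℕ} (hint : (H : Set (Finset α)).Pairwise fun A B => #(A ∩ B) ∈ L) :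
    (link H T : Set (Finset α)).Pairwise
      fun g h => #(g ∩ h) ∈ {ℓ ∈ L | #T ≤ ℓ}.image (· - #T) := by
  intro g hg h hh hgh
  obtain ⟨A, hA, hTA, rfl⟩ := mem_link.1 hg
  obtain ⟨B, hB, hTB, rfl⟩ := mem_link.1 hh
  have hTAB : T ⊆ A ∩ B := subset_inter hTA hTB
  have hinter : A \ T ∩ (B \ T) = (A ∩ B) \ T := by
    ext x
    simp only [mem_inter, mem_sdiff]
    tauto
  rw [hinter, card_sdiff_of_subset hTAB]
  refine mem_image_of_mem _ (mem_filter.2 ⟨hint hA hB ?_, card_le_card hTAB⟩)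
  rintro rfl
  exact hgh rfl

lemma card_filter_mem_link_le (y : α) :
    #{g ∈ link H T | y ∈ g} ≤ #{A ∈ H | insert y T ⊆ A} := by
  refine (card_le_card fun g hg => ?_).trans (card_image_le (f := (· \ T)))
  obtain ⟨hg, hyg⟩ := mem_filter.1 hg
  obtain ⟨A, hA, hTA, rfl⟩ := mem_link.1 hg
  exact mem_image.2 ⟨A, mem_filter.2 ⟨hA, insert_subset (mem_sdiff.1 hyg).1 hTA⟩, rfl⟩

lemma card_le_of_pairwiseDisjoint_subset_link {r : ℕ} {L : Finset ℕ} {B₀ : Finset α}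
    {M : Finset (Finset α)} (hH : (H : Set (Finset α)).Sized r)
    (hint : (H : Set (Finset α)).Pairwise fun A B => #(A ∩ B) ∈ L) (hmin : ∀ ℓ ∈ L, #T ≤ ℓ)
    (hB₀ : B₀ ∈ H) (hTB₀ : ¬T ⊆ B₀) (hML : M ⊆ link H T)
    (hM : (M : Set (Finset α)).PairwiseDisjoint id) : #M ≤ r := by
  by_contra! hr
  obtain ⟨g, hg, hB₀g⟩ := exists_disjoint_of_card_lt hM (B := B₀) (by rwa [hH hB₀])
  obtain ⟨A, hA, hTA, rfl⟩ := mem_link.1 (hML hg)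
  obtain rfl | hne := eq_or_ne B₀ A
  · exact hTB₀ hTA
  have hsub : B₀ ∩ A ⊆ T := fun x hx => by
    by_contra hxT
    exact disjoint_left.1 hB₀g (mem_inter.1 hx).1 (mem_sdiff.2 ⟨(mem_inter.1 hx).2, hxT⟩)
  have hBA : B₀ ∩ A = T := eq_of_subset_of_card_le hsub (hmin _ (hint hB₀ hA hne))
  exact hTB₀ (hBA ▸ inter_subset_left)

lemma card_filter_superset_le {r : ℕ} {L : Finset ℕ} {B₀ : Finset α} {P : ℚ}
    (hH : (H : Set (Finset α)).Sized r)
    (hint : (H : Set (Finset α)).Pairwise fun A B => #(A ∩ B) ∈ L) (hmin : ∀ ℓ ∈ L, #T ≤ ℓ)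
    (hTr : #T < r) (hB₀ : B₀ ∈ H) (hTB₀ : ¬T ⊆ B₀) (hP : 0 ≤ P)
    (hdeg : ∀ y ∉ T, (#{A ∈ H | insert y T ⊆ A} : ℚ) ≤ P) :
    (#{A ∈ H | T ⊆ A} : ℚ) ≤ r * r * P := by
  have hsize := sized_link (T := T) hH
  obtain ⟨U, hU, hhit⟩ := exists_hittingSet (G := link H T) (m := r) (s := r)
    (fun g hg => card_pos.1 (by rw [hsize hg]; omega)) (fun g hg => by rw [hsize hg]; omega)
    (fun M hML hM => card_le_of_pairwiseDisjoint_subset_link hH hint hmin hB₀ hTB₀ hML hM)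
  rw [← card_link]
  calc (#(link H T) : ℚ) ≤ #(U \ T) * P :=
        card_le_card_mul_of_cover (p := fun y g => y ∈ g) (fun g hg => ?_) fun y hy => ?_
    _ ≤ r * r * P := by
        gcongr
        exact_mod_cast (card_le_card sdiff_subset).trans hU
  · obtain ⟨y, hyg, hyU⟩ := not_disjoint_iff.1 (hhit g hg)
    exact ⟨y, mem_sdiff.2 ⟨hyU, disjoint_left.1 (disjoint_of_mem_link hg) hyg⟩, hyg⟩
  · exact (Nat.cast_le.2 (card_filter_mem_link_le y)).trans (hdeg y (mem_sdiff.1 hy).2)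

end Link

section Cases

variable {r n : ℕ} {L : Finset ℕ} {H : Finset (Finset α)}

lemma card_le_defBound_of_zero_mem {V : Finset α} (h0 : 0 ∈ L) (hL : L ⊆ range r)
    (hH : (H : Set (Finset α)).Sized r) (hV : ∀ A ∈ H, A ⊆ V) (hVn : #V ≤ n)
    (hP : 0 ≤ defBound n r (L.erase 0))
    (hdeg : ∀ x ∈ V, (#{A ∈ H | x ∈ A} : ℚ) ≤ defBound n r (L.erase 0)) :
    (#H : ℚ) ≤ defBound n r L := by
  have hr : (0 : ℚ) < r := by exact_mod_cast (mem_range.1 (hL h0)).trans_le' (Nat.zero_le 0)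
  rw [defBound, ← mul_prod_erase L _ h0, ← defBound, Nat.cast_zero, sub_zero, sub_zero,
    div_mul_eq_mul_div, le_div_iff₀ hr]
  calc (#H * r : ℚ) ≤ #V * defBound n r (L.erase 0) := card_mul_le_card_mul_of_degree_le hH hV hdeg
    _ ≤ n * defBound n r (L.erase 0) := by gcongr

lemma exists_mem_powersetCard_subset {A₀ : Finset α} {ℓ₁ : ℕ} (hH : (H : Set (Finset α)).Sized r)
    (hint : (H : Set (Finset α)).Pairwise fun A B => #(A ∩ B) ∈ L) (hmin : ∀ ℓ ∈ L, ℓ₁ ≤ ℓ)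
    (hℓ₁r : ℓ₁ ≤ r) (hA₀ : A₀ ∈ H) : ∀ B ∈ H, ∃ T ∈ A₀.powersetCard ℓ₁, T ⊆ B := by
  intro B hB
  have : ℓ₁ ≤ #(B ∩ A₀) := by
    obtain rfl | hne := eq_or_ne B A₀
    · rwa [inter_self, hH hB]
    · exact hmin _ (hint hB hA₀ hne)
  obtain ⟨T, hT, hTcard⟩ := exists_subset_card_eq this
  exact ⟨T, mem_powersetCard.2 ⟨hT.trans inter_subset_right, hTcard⟩, hT.trans inter_subset_left⟩

lemma card_le_defBound_of_zero_notMem (hn : 2 ^ r * r ^ 3 ≤ n) (hL : L ⊆ range r)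
    (hLne : L.Nonempty) (h0 : 0 ∉ L) (hH : (H : Set (Finset α)).Sized r)
    (hint : (H : Set (Finset α)).Pairwise fun A B => #(A ∩ B) ∈ L)
    (hstar : ∀ T : Finset α, T.Nonempty → #T ≤ r →
      (#{A ∈ H | T ⊆ A} : ℚ) ≤ defBound n r {ℓ ∈ L | #T ≤ ℓ}) :
    (#H : ℚ) ≤ defBound n r L := by
  have hrn := (le_two_pow_mul_cube r).trans hn
  obtain rfl | ⟨A₀, hA₀⟩ := H.eq_empty_or_nonempty
  · simpa using zero_le_one.trans (one_le_defBound hL hrn)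
  set ℓ₁ := L.min' hLne
  have hℓ₁L : ℓ₁ ∈ L := L.min'_mem hLne
  have hmin : ∀ ℓ ∈ L, ℓ₁ ≤ ℓ := fun ℓ hℓ => L.min'_le ℓ hℓ
  have hℓ₁r : ℓ₁ < r := mem_range.1 (hL hℓ₁L)
  have hℓ₁pos : 0 < ℓ₁ := Nat.pos_of_ne_zero fun h => h0 (h ▸ hℓ₁L)
  set P := defBound n r (L.erase ℓ₁)
  have hP : 0 ≤ P := zero_le_one.trans (one_le_defBound ((erase_subset _ _).trans hL) hrn)
  by_cases hcommon : ∃ T ∈ A₀.powersetCard ℓ₁, ∀ B ∈ H, T ⊆ B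
  · obtain ⟨T, hT, hTH⟩ := hcommon
    obtain ⟨-, hTcard⟩ := mem_powersetCard.1 hT
    have := hstar T (card_pos.1 (by omega)) (by omega)
    rwa [filter_true_of_mem hTH, hTcard, filter_true_of_mem hmin] at this
  push Not at hcommon
  have hstarT : ∀ T ∈ A₀.powersetCard ℓ₁, (#{A ∈ H | T ⊆ A} : ℚ) ≤ r * r * P := by
    intro T hT
    obtain ⟨B₀, hB₀, hTB₀⟩ := hcommon T hT
    obtain ⟨-, hTcard⟩ := mem_powersetCard.1 hT
    refine card_filter_superset_le hH hint (hTcard ▸ hmin) (by omega) hB₀ hTB₀ hP fun y hy => ?_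
    have := hstar (insert y T) (insert_nonempty y T) (by rw [card_insert_of_notMem hy]; omega)
    rwa [card_insert_of_notMem hy, hTcard, filter_succ_le_eq_erase hmin] at this
  calc (#H : ℚ) ≤ #(A₀.powersetCard ℓ₁) * (r * r * P) :=
        card_le_card_mul_of_cover (exists_mem_powersetCard_subset hH hint hmin hℓ₁r.le hA₀) hstarT
    _ ≤ 2 ^ r * r ^ 2 * P := by
        rw [card_powersetCard, hH hA₀, ← mul_assoc, ← sq]
        gcongr
        exact_mod_cast Nat.choose_le_two_pow r ℓ₁
    _ ≤ (n - ℓ₁) / (r - ℓ₁) * P := by gcongr; exact two_pow_mul_sq_le_div hn hℓ₁r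
    _ = defBound n r L := mul_prod_erase L (fun ℓ => ((n : ℚ) - ℓ) / ((r : ℚ) - ℓ)) hℓ₁L

end Cases

theorem card_le_defBound (r : ℕ) {n : ℕ} {L : Finset ℕ} {V : Finset α} {H : Finset (Finset α)}
    (hn : 2 ^ r * r ^ 3 ≤ n) (hL : L ⊆ range r) (hH : (H : Set (Finset α)).Sized r)
    (hV : ∀ A ∈ H, A ⊆ V) (hVn : #V ≤ n)
    (hint : (H : Set (Finset α)).Pairwise fun A B => #(A ∩ B) ∈ L) :
    (#H : ℚ) ≤ defBound n r L := by
  induction r using Nat.strong_induction_on generalizing n L V H with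
  | _ r IH =>
  have hrn := (le_two_pow_mul_cube r).trans hn
  have hstar : ∀ T : Finset α, T.Nonempty → #T ≤ r →
      (#{A ∈ H | T ⊆ A} : ℚ) ≤ defBound n r {ℓ ∈ L | #T ≤ ℓ} := by
    intro T hT hTr
    have hk := card_pos.2 hT
    by_cases hTV : T ⊆ V
    · have hthreshold := two_pow_mul_cube_add_sub_le (Nat.sub_le r #T)
      have := IH (r - #T) (by omega) (n := n - #T) (V := V \ T) (H := link H T)
        (by rw [Nat.sub_sub_self hTr] at hthreshold; omega)
        (image_sub_subset_range hL) (sized_link hH) (link_subset_sdiff hV) (by rw [card_sdiff_of_subset hTV]; omega)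
        (pairwise_link hint)
      rwa [card_link, defBound_image_sub (fun ℓ hℓ => (mem_filter.1 hℓ).2) hTr hrn] at this
    · rw [filter_false_of_mem fun A hA hTA => hTV (hTA.trans (hV A hA)), card_empty, Nat.cast_zero]
      exact zero_le_one.trans (one_le_defBound ((filter_subset _ _).trans hL) hrn)
  obtain rfl | hLne := L.eq_empty_or_nonempty
  · have : #H ≤ 1 := card_le_one.2 fun A hA B hB => by
      by_contra hAB
      simpa using hint hA hB hAB
    simpa [defBound] using (Nat.cast_le.2 this : (#H : ℚ) ≤ 1)
  by_cases h0 : 0 ∈ L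
  · have herase : {ℓ ∈ L | 1 ≤ ℓ} = L.erase 0 := filter_succ_le_eq_erase fun ℓ _ => ℓ.zero_le
    refine card_le_defBound_of_zero_mem h0 hL hH hV hVn
      (zero_le_one.trans (one_le_defBound ((erase_subset _ _).trans hL) hrn)) fun x hx => ?_
    have := hstar {x} (singleton_nonempty x) (by rw [card_singleton]; exact mem_range.1 (hL h0))
    simpa [herase] using this
  · exact card_le_defBound_of_zero_notMem hn hL hLne h0 hH hint hstar

end DezaErdosFrankl

theorem deza_erdos_frankl_general (r n : ℕ) (hn : 2 ^ r * r ^ 3 ≤ n)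
    (L : Finset ℕ) (hL : L ⊆ Finset.range r)
    (H : Finset (Finset (Fin n)))
    (huniform : ∀ A ∈ H, A.card = r)
    (hinter : ∀ A ∈ H, ∀ B ∈ H, A ≠ B → (A ∩ B).card ∈ L) :
    (H.card : ℚ) ≤ ∏ ℓ ∈ L, ((n : ℚ) - ℓ) / ((r : ℚ) - ℓ) :=
  DezaErdosFrankl.card_le_defBound r hn hL (V := univ) (fun A hA => huniform A hA)
    (fun A _ => subset_univ A) (by simp) (fun A hA B hB => hinter A hA B hB)

/-- **Deza–Erdős–Frankl theorem** (upper bound): if `H` is an `L`-intersecting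
`r`-uniform hypergraph on `n ≥ 2^r * r^3` vertices with `r ≥ 3` and
`L ⊆ {0, …, r-1}`, then `|H| ≤ ∏_{ℓ ∈ L} (n - ℓ)/(r - ℓ)`. -/
theorem deza_erdos_frankl (r n : ℕ) (hr : 3 ≤ r) (hn : 2 ^ r * r ^ 3 ≤ n)
    (L : Finset ℕ) (hL : L ⊆ Finset.range r)
    (H : Finset (Finset (Fin n)))
    (huniform : ∀ A ∈ H, A.card = r)
    (hinter : ∀ A ∈ H, ∀ B ∈ H, A ≠ B → (A ∩ B).card ∈ L) :
    (H.card : ℚ) ≤ ∏ ℓ ∈ L, ((n : ℚ) - ℓ) / ((r : ℚ) - ℓ) :=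
  deza_erdos_frankl_general r n hn L hL H huniform hinter
end

section
/- Let 0 = ℓ₁ < ℓ₂ < ℓ₃ < r be integers with r - ℓ₃ = ℓ₃ - ℓ₂ and ℓ₃ - ℓ₂ ≠ ℓ₂. Then every {ℓ₁, ℓ₂, ℓ₃}-intersecting r-uniform hypergraph H on n vertices satisfies |H| ≤ C(n,2). -/
/-!
For `A ∈ H` put `f_A(B) = |A ∩ B| (|A ∩ B| - ℓ₂)`, and for `|I| ≤ 1` put
`g_I(B) = [I ⊆ B] (|B| - r)`. As functions of `B` these are multilinear polynomials of degree at
most `2` in the characteristic vector of `B`, a space spanned by `1 + n + C(n, 2)` monomials.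
The `g_I` are independent by triangularity and vanish on the `r`-uniform family `H`.
Since `r (r - ℓ₂) = 2r (ℓ₃ - ℓ₂)`, and `ℓ₃` divides `2r` only if `2r = 3ℓ₃`, i.e. `ℓ₃ = 2ℓ₂`,
some prime power `q` divides `ℓ₃ (ℓ₃ - ℓ₂)` but not `r (r - ℓ₂)`. The matrix `(f_A(B))_{A, B ∈ H}`
is then diagonal modulo `q` with diagonal entries not divisible by `q`, so the `f_A` stay
independent after restriction to `H`. Counting dimensions gives `|H| + 1 + n ≤ 1 + n + C(n, 2)`.
-/

open Finset

theorem LinearIndependent.sumElim_of_map_eq_zero {R M N ι κ : Type*} [Ring R] [AddCommGroup M]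
    [AddCommGroup N] [Module R M] [Module R N] (φ : M →ₗ[R] N) {f : ι → M} {g : κ → M}
    (hf : LinearIndependent R f) (hfφ : ∀ i, φ (f i) = 0) (hg : LinearIndependent R (φ ∘ g)) :
    LinearIndependent R (Sum.elim f g) :=
  LinearIndependent.sumElim_of_quotient (f := fun i => (⟨f i, hfφ i⟩ : LinearMap.ker φ))
    (hf.of_comp (LinearMap.ker φ).subtype) g (hg.of_comp ((LinearMap.ker φ).liftQ φ le_rfl))

theorem LinearIndependent.card_le_card_of_mem_span_range {R M ι κ : Type*} [Ring R]
    [StrongRankCondition R] [AddCommGroup M] [Module R M] [Fintype ι] [Fintype κ] {v : ι → M}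
    (hv : LinearIndependent R v) {b : κ → M} (hvb : ∀ i, v i ∈ Submodule.span R (Set.range b)) :
    Fintype.card ι ≤ Fintype.card κ := by
  classical
  exact (linearIndependent_le_span_aux' v hv (Set.range b) (Set.range_subset_iff.2 hvb)).trans
    (Fintype.card_range_le b)

theorem linearIndependent_of_triangular {R α ι β : Type*} [Ring R] [NoZeroDivisors R] [Fintype ι]
    [LinearOrder β] {v : ι → α → R} (x : ι → α) (w : ι → β) (hdiag : ∀ i, v i (x i) ≠ 0)
    (htriang : ∀ i j, j ≠ i → w i ≤ w j → v j (x i) = 0) : LinearIndependent R v := by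
  classical
  rw [Fintype.linearIndependent_iff]
  intro c hc
  by_contra! hsupp
  obtain ⟨i, hi, hmin⟩ := (univ.filter (c · ≠ 0)).exists_min_image w
    (by simpa [Finset.filter_nonempty_iff] using hsupp)
  have hci : c i ≠ 0 := (mem_filter.1 hi).2
  have heval : ∑ j, c j * v j (x i) = 0 := by
    simpa [Finset.sum_apply] using congrFun hc (x i)
  rw [Finset.sum_eq_single i (fun j _ hji => ?_) (by simp)] at heval
  · exact mul_ne_zero hci (hdiag i) heval
  · by_cases hcj : c j = 0
    · simp [hcj]
    · simp [htriang i j hji (hmin j (by simp [hcj]))]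

theorem Int.linearIndependent_of_prime_pow_dvd_offDiag {ι : Type*} [Fintype ι] {p : ℤ}
    (hp : Prime p) {k : ℕ} (M : ι → ι → ℤ) (hdiag : ∀ i, ¬ p ^ k ∣ M i i)
    (hoff : ∀ i j, i ≠ j → p ^ k ∣ M i j) : LinearIndependent ℤ M := by
  classical
  rw [Fintype.linearIndependent_iff]
  have hdvd : ∀ c : ι → ℤ, ∑ i, c i • M i = 0 → ∀ i, p ∣ c i := by
    intro c hc i
    by_contra hpc
    have hcol : c i * M i i = -∑ j ∈ univ.erase i, c j * M j i := by
      have h := congrFun hc i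
      simp only [Finset.sum_apply, Pi.smul_apply, smul_eq_mul, Pi.zero_apply] at h
      rw [← Finset.add_sum_erase _ _ (mem_univ i)] at h
      linear_combination h
    refine hdiag i (hp.pow_dvd_of_dvd_mul_left k hpc ?_)
    rw [hcol, dvd_neg]
    exact Finset.dvd_sum fun j hj => (hoff j i (ne_of_mem_erase hj)).mul_left _
  have hpow : ∀ m (c : ι → ℤ), ∑ i, c i • M i = 0 → ∀ i, p ^ m ∣ c i := by
    intro m
    induction m with
    | zero => simp
    | succ m ih =>
      intro c hc i
      choose d hd using hdvd c hc
      have hd0 : ∑ i, d i • M i = 0 := by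
        have : p • ∑ i, d i • M i = 0 := by
          rw [← hc, Finset.smul_sum]
          simp only [smul_smul, hd]
        exact (smul_eq_zero.1 this).resolve_left hp.ne_zero
      rw [hd i, pow_succ']
      exact mul_dvd_mul_left p (ih d hd0 i)
  intro c hc i
  by_contra hci
  obtain ⟨m, hm⟩ := Int.finiteMultiplicity_iff.2
    ⟨fun h => hp.not_isUnit (Int.isUnit_iff_natAbs_eq.2 h), hci⟩
  exact hm (hpow _ c hc i)

theorem Fintype.card_finset_card_le_succ (α : Type*) [Fintype α] (k : ℕ) :
    Fintype.card {S : Finset α // S.card ≤ k + 1} =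
      Fintype.card {S : Finset α // S.card ≤ k} + (Fintype.card α).choose (k + 1) := by
  rw [← Fintype.card_finset_len, ← Fintype.card_subtype_or_disjoint]
  · exact Fintype.card_congr (Equiv.subtypeEquivRight fun S => Nat.le_add_one_iff)
  · exact Pi.disjoint_iff.2 fun S => Prop.disjoint_iff.2 (by omega)

namespace Finset

variable (R : Type*) [CommRing R] {α : Type*} [DecidableEq α]

/-- The multilinear monomial `∏ i ∈ S, xᵢ`, evaluated at the characteristic vector of `B`. -/
def subsetIndicator (S B : Finset α) : R := if S ⊆ B then 1 else 0

/-- Functions of `B` given by multilinear polynomials of degree at most `k` in the characteristic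
vector of `B`. -/
def lowDegreeSpan (α : Type*) [DecidableEq α] (k : ℕ) : Submodule R (Finset α → R) :=
  Submodule.span R (Set.range fun S : {S : Finset α // S.card ≤ k} => subsetIndicator R S.1)

variable {R}

theorem subsetIndicator_mem_lowDegreeSpan {k : ℕ} {S : Finset α} (hS : S.card ≤ k) :
    subsetIndicator R S ∈ lowDegreeSpan R α k :=
  Submodule.subset_span ⟨⟨S, hS⟩, rfl⟩

theorem sum_powersetCard_subsetIndicator (j : ℕ) (A B : Finset α) :
    ∑ S ∈ A.powersetCard j, subsetIndicator R S B = ((A ∩ B).card.choose j : R) := by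
  have hfilter : (A.powersetCard j).filter (· ⊆ B) = (A ∩ B).powersetCard j := by
    ext S
    simp only [mem_filter, mem_powersetCard, subset_inter_iff]
    tauto
  simp only [subsetIndicator]
  rw [sum_boole, hfilter, card_powersetCard]

theorem choose_card_inter_mem_lowDegreeSpan {j k : ℕ} (hjk : j ≤ k) (A : Finset α) :
    (fun B => ((A ∩ B).card.choose j : R)) ∈ lowDegreeSpan R α k := by
  have hsum : (fun B => ((A ∩ B).card.choose j : R)) =
      ∑ S ∈ A.powersetCard j, subsetIndicator R S := by
    ext B
    rw [Finset.sum_apply, sum_powersetCard_subsetIndicator]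
  rw [hsum]
  refine Submodule.sum_mem _ fun S hS => subsetIndicator_mem_lowDegreeSpan ?_
  rw [(mem_powersetCard.1 hS).2]
  exact hjk

theorem card_inter_mul_sub_mem_lowDegreeSpan (A : Finset α) (l : R) :
    (fun B => ((A ∩ B).card : R) * ((A ∩ B).card - l)) ∈ lowDegreeSpan R α 2 := by
  have hpoly : (fun B => ((A ∩ B).card : R) * ((A ∩ B).card - l)) =
      (2 : R) • (fun B => ((A ∩ B).card.choose 2 : R)) +
        (1 - l) • (fun B => ((A ∩ B).card.choose 1 : R)) := by
    ext B
    have htwo : ((A ∩ B).card.choose 2 : R) * 2 = (A ∩ B).card * ((A ∩ B).card - 1) := by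
      rw [← Nat.cast_descFactorial_two, Nat.descFactorial_eq_factorial_mul_choose,
        Nat.factorial_two]
      push_cast
      ring
    simp only [Pi.add_apply, Pi.smul_apply, smul_eq_mul, Nat.choose_one_right]
    linear_combination -htwo
  rw [hpoly]
  exact add_mem (Submodule.smul_mem _ _ (choose_card_inter_mem_lowDegreeSpan le_rfl A))
    (Submodule.smul_mem _ _ (choose_card_inter_mem_lowDegreeSpan one_le_two A))

theorem subsetIndicator_mul_card_sub_mem_lowDegreeSpan [Fintype α] {k : ℕ} {I : Finset α}
    (hI : I.card ≤ k) (r : R) :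
    (fun B => subsetIndicator R I B * (B.card - r)) ∈ lowDegreeSpan R α (k + 1) := by
  have hexpand : (fun B => subsetIndicator R I B * (B.card - r)) =
      ∑ j, subsetIndicator R (insert j I) - r • subsetIndicator R I := by
    ext B
    by_cases hIB : I ⊆ B
    · simp [subsetIndicator, hIB, insert_subset_iff, mul_comm]
    · simp [subsetIndicator, hIB, insert_subset_iff]
  rw [hexpand]
  refine sub_mem (Submodule.sum_mem _ fun j _ => subsetIndicator_mem_lowDegreeSpan ?_)
    (Submodule.smul_mem _ _ (subsetIndicator_mem_lowDegreeSpan (by omega)))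
  exact (card_insert_le j I).trans (by omega)

theorem linearIndependent_subsetIndicator_mul_card_sub [NoZeroDivisors R] [CharZero R] [Fintype α]
    {k r : ℕ} (hkr : k < r) :
    LinearIndependent R fun I : {I : Finset α // I.card ≤ k} =>
      fun B : Finset α => subsetIndicator R I.1 B * (B.card - r) := by
  refine linearIndependent_of_triangular (fun I => I.1) (fun I => I.1.card) (fun I => ?_)
    (fun I J hJI hcard => ?_)
  · have hIr : I.1.card ≠ r := by have := I.2; omega
    simpa [subsetIndicator, sub_eq_zero] using hIr
  · have hJI' : ¬ J.1 ⊆ I.1 := fun hsub => hJI (Subtype.ext (eq_of_subset_of_card_le hsub hcard))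
    simp [subsetIndicator, hJI']

end Finset

theorem exists_prime_pow_dvd_mul_sub_not_dvd {l₂ l₃ r : ℕ} (h1 : 0 < l₂) (h2 : l₂ < l₃)
    (hr : r + l₂ = 2 * l₃) (hne : l₃ ≠ 2 * l₂) :
    ∃ (q : ℤ) (k : ℕ), Prime q ∧ q ^ k ∣ l₃ * (l₃ - l₂) ∧ ¬ q ^ k ∣ r * (r - l₂) := by
  have hndvd : ¬ l₃ * (l₃ - l₂) ∣ r * (r - l₂) := by
    have hfactor : r * (r - l₂) = 2 * r * (l₃ - l₂) := by
      rw [show r - l₂ = 2 * (l₃ - l₂) by omega]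
      ring
    rw [hfactor, Nat.mul_dvd_mul_iff_right (by omega)]
    rintro ⟨m, hm⟩
    have hm3 : m = 3 := by
      have : 2 < m := by nlinarith
      have : m < 4 := by nlinarith
      omega
    subst hm3
    omega
  rw [Nat.dvd_iff_prime_pow_dvd_dvd] at hndvd
  push Not at hndvd
  obtain ⟨p, k, hp, hdvd, hnot⟩ := hndvd
  refine ⟨p, k, Nat.prime_iff_prime_int.1 hp, ?_, ?_⟩
  · have := Int.natCast_dvd_natCast.2 hdvd
    push_cast [Nat.cast_sub h2.le] at this
    exact this
  · have hcast : ((r * (r - l₂) : ℕ) : ℤ) = r * (r - l₂) := by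
      push_cast [Nat.cast_sub (by omega : l₂ ≤ r)]
      ring
    rw [← hcast]
    exact_mod_cast hnot

theorem L_intersecting_three_bound_general (l₂ l₃ r n : ℕ)
    (h1 : 0 < l₂) (h2 : l₂ < l₃)
    (hAP : r - l₃ = l₃ - l₂) (hne : l₃ - l₂ ≠ l₂)
    (H : Finset (Finset (Fin n)))
    (huniform : ∀ A ∈ H, A.card = r)
    (hinter : ∀ A ∈ H, ∀ B ∈ H, A ≠ B →
      (A ∩ B).card ∈ ({0, l₂, l₃} : Finset ℕ)) :
    H.card ≤ n.choose 2 := by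
  obtain ⟨q, k, hq, hdvd, hndvd⟩ :=
    exists_prime_pow_dvd_mul_sub_not_dvd h1 h2 (by omega : r + l₂ = 2 * l₃) (by omega)
  let f : H → Finset (Fin n) → ℤ := fun A B => ((A.1 ∩ B).card : ℤ) * ((A.1 ∩ B).card - l₂)
  let g : {I : Finset (Fin n) // I.card ≤ 1} → Finset (Fin n) → ℤ :=
    fun I B => subsetIndicator ℤ I.1 B * (B.card - r)
  have hf : LinearIndependent ℤ fun A : H => fun B : H => f A B := by
    refine Int.linearIndependent_of_prime_pow_dvd_offDiag hq (k := k) _ (fun A => ?_)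
      (fun A B hAB => ?_)
    · simpa [f, huniform A.1 A.2] using hndvd
    · have hAB' := hinter A.1 A.2 B.1 B.2 (Subtype.coe_ne_coe.2 hAB)
      simp only [mem_insert, mem_singleton] at hAB'
      rcases hAB' with h | h | h <;> simp [f, h, hdvd]
  have hli : LinearIndependent ℤ (Sum.elim g f) :=
    (linearIndependent_subsetIndicator_mul_card_sub (by omega)).sumElim_of_map_eq_zero
      (LinearMap.funLeft ℤ ℤ (Subtype.val : H → Finset (Fin n)))
      (fun I => funext fun A => by simp [huniform A.1 A.2]) hf
  have hcard := hli.card_le_card_of_mem_span_range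
    (b := fun S : {S : Finset (Fin n) // S.card ≤ 2} => subsetIndicator ℤ S.1) <| by
      rintro (I | A)
      exacts [subsetIndicator_mul_card_sub_mem_lowDegreeSpan I.2 _,
        card_inter_mul_sub_mem_lowDegreeSpan A.1 _]
  rw [Fintype.card_sum, Fintype.card_coe, Fintype.card_finset_card_le_succ _ 1,
    Fintype.card_fin] at hcard
  exact Nat.le_of_add_le_add_left hcard

/-- If `0 = ℓ₁ < ℓ₂ < ℓ₃ < r` with `r - ℓ₃ = ℓ₃ - ℓ₂` and `ℓ₃ - ℓ₂ ≠ ℓ₂`, then every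
`{ℓ₁, ℓ₂, ℓ₃}`-intersecting `r`-uniform hypergraph on `n` vertices has at most `C(n,2)`
edges. -/
theorem L_intersecting_three_bound (l₂ l₃ r n : ℕ)
    (h1 : 0 < l₂) (h2 : l₂ < l₃) (h3 : l₃ < r)
    (hAP : r - l₃ = l₃ - l₂) (hne : l₃ - l₂ ≠ l₂)
    (H : Finset (Finset (Fin n)))
    (huniform : ∀ A ∈ H, A.card = r)
    (hinter : ∀ A ∈ H, ∀ B ∈ H, A ≠ B →
      (A ∩ B).card ∈ ({0, l₂, l₃} : Finset ℕ)) :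
    H.card ≤ n.choose 2 :=
  L_intersecting_three_bound_general l₂ l₃ r n h1 h2 hAP hne H huniform hinter
end

section
/- Let n ≥ t ≥ r ≥ 2 be integers. Every n-vertex graph G containing no clique on t+1 vertices satisfies N(K_r, G) ≤ N(K_r, T(n,t)), where N(K_r, G) denotes the number of r-cliques in G and T(n,t) is the Turán graph (the balanced complete t-partite graph on n vertices). -/
/-!
Erdős's argument, by induction on the number of vertices. By Turán's theorem a `K_{t+1}`-free graph
`G` on `m + 1` vertices has no more edges than `T(m + 1, t)`, so it has a vertex `v` of degree at
most `m - ⌊m / t⌋`, the degree of the last vertex of `T(m + 1, t)`. The `r`-cliques of `G` avoiding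
`v` are those of `G - v`, and those containing `v` correspond to the `(r - 1)`-cliques of the
`K_t`-free neighbourhood of `v`; by induction there are at most as many as in `T(m, t)` and in
`T(m - ⌊m / t⌋, t - 1)` respectively. Splitting the `r`-cliques of `T(m + 1, t)` in the same way at
its last vertex, whose neighbourhood contains a copy of `T(m - ⌊m / t⌋, t - 1)`, shows that this sum
is at most the number of `r`-cliques of `T(m + 1, t)`.
-/

open Finset SimpleGraph

/-- Vertex `i` of the grid with `t` columns (row `i / t`, column `i % t`) goes to the same row
of the grid with `t + 1` columns, skipping the column `c`. -/
def skipColumn (c t i : ℕ) : ℕ :=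
  (t + 1) * (i / t) + if c ≤ i % t then i % t + 1 else i % t

lemma skipColumn_mod {c t : ℕ} (ht : 0 < t) (i : ℕ) :
    skipColumn c t i % (t + 1) = if c ≤ i % t then i % t + 1 else i % t := by
  have := Nat.mod_lt i ht
  rw [skipColumn, Nat.mul_add_mod, Nat.mod_eq_of_lt (by split_ifs <;> omega)]

lemma skipColumn_mod_ne {c t : ℕ} (ht : 0 < t) (i : ℕ) : skipColumn c t i % (t + 1) ≠ c := by
  rw [skipColumn_mod ht]
  split_ifs <;> omega

lemma skipColumn_mod_eq_iff {c t : ℕ} (ht : 0 < t) (i j : ℕ) :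
    skipColumn c t i % (t + 1) = skipColumn c t j % (t + 1) ↔ i % t = j % t := by
  rw [skipColumn_mod ht, skipColumn_mod ht]
  split_ifs <;> omega

lemma skipColumn_injective {c t : ℕ} (ht : 0 < t) : Function.Injective (skipColumn c t) := by
  intro i j hij
  have hmod := (skipColumn_mod_eq_iff ht i j).1 (congrArg (· % (t + 1)) hij)
  have hdiv : i / t = j / t := by
    refine Nat.eq_of_mul_eq_mul_left (by omega : 0 < t + 1) ?_
    unfold skipColumn at hij
    rw [hmod] at hij
    omega
  rw [← Nat.div_add_mod i t, ← Nat.div_add_mod j t, hdiv, hmod]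

lemma Nat.pos_of_lt_sub_div {m t i : ℕ} (hi : i < m - m / (t + 1)) : 0 < t :=
  Nat.pos_of_ne_zero fun ht ↦ by simp [ht] at hi

lemma skipColumn_lt {m t i : ℕ} (hi : i < m - m / (t + 1)) :
    skipColumn (m % (t + 1)) t i < m + 1 := by
  have ht := Nat.pos_of_lt_sub_div hi
  have hm := Nat.div_add_mod m (t + 1)
  have hi' := Nat.div_add_mod i t
  have hc := Nat.mod_lt m (by omega : 0 < t + 1)
  have hj := Nat.mod_lt i ht
  unfold skipColumn
  set q := m / (t + 1)
  set k := i / t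
  have hqt : (t + 1) * q = t * q + q := by ring
  have hkt : (t + 1) * k = t * k + k := by ring
  have hkq : k ≤ q := by
    have : i < t * (q + 1) := by rw [Nat.mul_succ]; omega
    exact Nat.lt_succ_iff.1 ((Nat.div_lt_iff_lt_mul ht).2 (by rwa [mul_comm]))
  rcases hkq.lt_or_eq with hkq | hkq
  · have : (t + 1) * (k + 1) ≤ (t + 1) * q := Nat.mul_le_mul_left _ hkq
    rw [Nat.mul_succ] at this
    split_ifs <;> omega
  · rw [hkq] at hkt hi' ⊢
    split_ifs <;> omega

namespace SimpleGraph

variable {V W : Type*} {G : SimpleGraph V} {H : SimpleGraph W}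

def Embedding.codRestrict (f : G ↪g H) (s : Set W) (hs : ∀ v, f v ∈ s) : G ↪g H.induce s where
  toFun v := ⟨f v, hs v⟩
  inj' _ _ h := f.injective (congrArg Subtype.val h)
  map_rel_iff' := f.map_rel_iff

theorem ncard_cliqueSet_le_of_embedding [Finite W] (f : G ↪g H) (n : ℕ) :
    (G.cliqueSet n).ncard ≤ (H.cliqueSet n).ncard :=
  Set.ncard_le_ncard_of_injOn (Finset.map f.toEmbedding)
    (fun _ hA ↦ hA.map.mono ((map_le_iff_le_comap _ _ _).2 fun _ _ ↦ f.map_adj_iff.2))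
    (Finset.map_injective _).injOn

theorem ncard_cliqueSet_induce (s : Set V) (n : ℕ) :
    ((G.induce s).cliqueSet n).ncard = {A : Finset V | G.IsNClique n A ∧ ↑A ⊆ s}.ncard := by
  classical
  rw [← Set.ncard_image_of_injective _ (Finset.map_injective (Function.Embedding.subtype (· ∈ s)))]
  congr 1
  ext A
  simp only [Set.mem_image, mem_cliqueSet_iff, isNClique_induce_iff]
  constructor
  · rintro ⟨B, hB, rfl⟩
    exact ⟨hB, map_subtype_subset B⟩
  · rintro ⟨hA, hAs⟩
    exact ⟨A.subtype (· ∈ s), by rwa [subtype_map_of_mem hAs], subtype_map_of_mem hAs⟩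

theorem ncard_cliqueSet_succ [Finite V] (v : V) (n : ℕ) :
    (G.cliqueSet (n + 1)).ncard =
      ((G.induce {v}ᶜ).cliqueSet (n + 1)).ncard +
        ((G.induce (G.neighborSet v)).cliqueSet n).ncard := by
  classical
  rw [ncard_cliqueSet_induce, ncard_cliqueSet_induce, add_comm (Set.ncard _),
    ← Set.ncard_inter_add_ncard_sdiff_eq_ncard (G.cliqueSet (n + 1)) {A | v ∈ A}]
  congr 1
  · refine Set.ncard_congr (fun A _ ↦ A.erase v) ?_ ?_ ?_
    · rintro A ⟨hA, hvA : v ∈ A⟩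
      refine ⟨hA.erase_of_mem hvA, fun w hw ↦ ?_⟩
      obtain ⟨hwv, hwA⟩ := mem_erase.1 hw
      exact hA.1 hvA hwA (Ne.symm hwv)
    · rintro A B ⟨-, hvA : v ∈ A⟩ ⟨-, hvB : v ∈ B⟩ hAB
      rw [← insert_erase hvA, hAB, insert_erase hvB]
    · rintro B ⟨hB, hBv⟩
      have hvB : v ∉ B := fun h ↦ G.irrefl (hBv h)
      exact ⟨insert v B, ⟨hB.insert fun w hw ↦ hBv hw, mem_insert_self v B⟩, erase_insert hvB⟩
  · congr 1
    ext A
    simp [Set.subset_compl_singleton_iff]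

lemma turanGraph_degree_add_count {N t : ℕ} (i : Fin N) :
    (turanGraph N t).degree i + N.count (· ≡ i [MOD t]) = N := by
  have hdeg : (turanGraph N t).degree i = #{x ∈ range N | ¬x ≡ i [MOD t]} := by
    rw [← Nat.Iio_eq_range, ← Fin.map_valEmbedding_univ, filter_map, card_map, degree,
      neighborFinset_eq_filter]
    congr 1
    ext j
    simp [turanGraph_adj, Nat.ModEq, eq_comm]
  rw [hdeg, Nat.count_eq_card_filter_range, add_comm, card_filter_add_card_filter_not,
    card_range]

lemma turanGraph_degree_last {m t : ℕ} (ht : 0 < t) :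
    (turanGraph (m + 1) t).degree (Fin.last m) = m - m / t := by
  have h := turanGraph_degree_add_count (t := t) (Fin.last m)
  simp only [Fin.val_last, Nat.count_succ, Nat.count_modEq_card _ ht, lt_irrefl, if_false,
    Nat.ModEq.refl, if_true] at h
  omega

lemma turanGraph_degree_le {m t : ℕ} (ht : 0 < t) (i : Fin (m + 1)) :
    (turanGraph (m + 1) t).degree i ≤ m - m / t + 1 := by
  have h := turanGraph_degree_add_count (t := t) i
  have hcount : m / t ≤ (m + 1).count (· ≡ i [MOD t]) :=
    calc m / t ≤ m.count (· ≡ i [MOD t]) := by rw [Nat.count_modEq_card _ ht]; omega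
      _ ≤ (m + 1).count (· ≡ i [MOD t]) := Nat.count_monotone _ m.le_succ
  have := Nat.div_le_self m t
  omega

theorem CliqueFree.exists_degree_le [Fintype V] [DecidableRel G.Adj] {m t : ℕ}
    (hV : Fintype.card V = m + 1) (hG : G.CliqueFree (t + 1)) :
    ∃ v, G.degree v ≤ m - m / t := by
  have ht : 0 < t := by
    refine Nat.pos_of_ne_zero fun ht ↦ ?_
    rw [ht, zero_add, cliqueFree_one, ← Fintype.card_eq_zero_iff] at hG
    omega
  by_contra! hdeg
  have hedges : #G.edgeFinset ≤ #(turanGraph (m + 1) t).edgeFinset := by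
    rw [card_edgeFinset_turanGraph, ← hV]
    exact hG.card_edgeFinset_le
  have hturan : ∑ i, (turanGraph (m + 1) t).degree i < ∑ _ : Fin (m + 1), (m - m / t + 1) :=
    sum_lt_sum (fun i _ ↦ turanGraph_degree_le ht i)
      ⟨Fin.last m, mem_univ _, by rw [turanGraph_degree_last ht]; omega⟩
  have hG : ∑ _ : V, (m - m / t + 1) ≤ ∑ v, G.degree v :=
    sum_le_sum fun v _ ↦ hdeg v
  rw [sum_degrees_eq_twice_card_edges, sum_const, card_univ, hV] at hG
  rw [sum_degrees_eq_twice_card_edges, sum_const, card_univ, Fintype.card_fin] at hturan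
  omega

def turanGraphCastLE {m n : ℕ} (h : m ≤ n) (t : ℕ) : turanGraph m t ↪g turanGraph n t :=
  ⟨Fin.castLEEmb h, Iff.rfl⟩

def turanGraphSkipColumn (m t : ℕ) :
    turanGraph (m - m / (t + 1)) t ↪g turanGraph (m + 1) (t + 1) where
  toFun i := ⟨skipColumn (m % (t + 1)) t i, skipColumn_lt i.2⟩
  inj' i _ h := Fin.ext (skipColumn_injective (Nat.pos_of_lt_sub_div i.2) (Fin.val_eq_of_eq h))
  map_rel_iff' {i j} := not_congr (skipColumn_mod_eq_iff (Nat.pos_of_lt_sub_div i.2) i j)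

lemma turanGraph_adj_last_turanGraphSkipColumn {m t : ℕ} (i : Fin (m - m / (t + 1))) :
    (turanGraph (m + 1) (t + 1)).Adj (Fin.last m) (turanGraphSkipColumn m t i) :=
  (skipColumn_mod_ne (Nat.pos_of_lt_sub_div i.2) i).symm

lemma ncard_cliqueSet_turanGraph_add_le (m t r : ℕ) :
    ((turanGraph m (t + 1)).cliqueSet (r + 1)).ncard +
        ((turanGraph (m - m / (t + 1)) t).cliqueSet r).ncard ≤
      ((turanGraph (m + 1) (t + 1)).cliqueSet (r + 1)).ncard := by
  rw [ncard_cliqueSet_succ (Fin.last m)]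
  exact add_le_add
    (ncard_cliqueSet_le_of_embedding ((turanGraphCastLE m.le_succ _).codRestrict _
      fun i ↦ (Fin.castSucc_lt_last i).ne) _)
    (ncard_cliqueSet_le_of_embedding ((turanGraphSkipColumn m t).codRestrict _
      turanGraph_adj_last_turanGraphSkipColumn) _)

theorem CliqueFree.ncard_cliqueSet_le_turanGraph [Finite V] {t : ℕ} (hG : G.CliqueFree (t + 1))
    (r : ℕ) : (G.cliqueSet r).ncard ≤ ((turanGraph (Nat.card V) t).cliqueSet r).ncard := by
  induction hN : Nat.card V using Nat.strong_induction_on generalizing V t r with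
  | _ N ih =>
  cases r with
  | zero => simp [cliqueSet_zero]
  | succ r =>
  cases N with
  | zero =>
    have : IsEmpty V := Finite.card_eq_zero_iff.1 hN
    rw [cliqueSet_eq_empty_iff.2 ((cliqueFree_one.2 this).mono r.succ_pos), Set.ncard_empty]
    exact Nat.zero_le _
  | succ m =>
  have := Fintype.ofFinite V
  classical
  obtain ⟨v, hv⟩ := hG.exists_degree_le (by rw [← Nat.card_eq_fintype_card, hN])
  obtain ⟨t, rfl⟩ : ∃ t', t = t' + 1 := Nat.exists_eq_add_one.2 <| Nat.pos_of_ne_zero <| by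
    rintro rfl
    exact (cliqueFree_one.1 hG).false v
  have hcompl : Nat.card ({v}ᶜ : Set V) = m := by
    rw [Nat.card_coe_set_eq, Set.ncard_compl, Set.ncard_singleton, hN, Nat.add_sub_cancel]
  have hnbr : Nat.card (G.neighborSet v) = G.degree v := by
    rw [Nat.card_eq_fintype_card, card_neighborSet_eq_degree]
  have hfree_compl : (G.induce {v}ᶜ).CliqueFree (t + 2) :=
    (cliqueFree_induce_iff _ _ _).2 hG.cliqueFreeOn
  have hfree_nbr : (G.induce (G.neighborSet v)).CliqueFree (t + 1) :=
    (cliqueFree_induce_iff _ _ _).2 <|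
      Set.univ_inter (G.neighborSet v) ▸ CliqueFreeOn.of_succ G hG.cliqueFreeOn (Set.mem_univ v)
  calc (G.cliqueSet (r + 1)).ncard
      = ((G.induce {v}ᶜ).cliqueSet (r + 1)).ncard +
          ((G.induce (G.neighborSet v)).cliqueSet r).ncard := ncard_cliqueSet_succ v r
    _ ≤ ((turanGraph m (t + 1)).cliqueSet (r + 1)).ncard +
          ((turanGraph (G.degree v) t).cliqueSet r).ncard :=
      add_le_add (ih m m.lt_succ_self hfree_compl (r + 1) hcompl)
        (ih _ (Nat.lt_succ_of_le (hv.trans (Nat.sub_le _ _))) hfree_nbr r hnbr)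
    _ ≤ ((turanGraph m (t + 1)).cliqueSet (r + 1)).ncard +
          ((turanGraph (m - m / (t + 1)) t).cliqueSet r).ncard :=
      Nat.add_le_add_left (ncard_cliqueSet_le_of_embedding (turanGraphCastLE hv t) r) _
    _ ≤ _ := ncard_cliqueSet_turanGraph_add_le m t r

end SimpleGraph

theorem erdos_clique_count_general (n t r : ℕ) (G : SimpleGraph (Fin n)) (hG : G.CliqueFree (t + 1)) :
    {A : Finset (Fin n) | G.IsNClique r A}.ncard ≤
      {A : Finset (Fin n) | (turanGraph n t).IsNClique r A}.ncard := by
  have h := hG.ncard_cliqueSet_le_turanGraph r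
  rwa [Nat.card_fin] at h

/-- **Erdős's clique-counting generalization of Turán's theorem**: for `n ≥ t ≥ r ≥ 2`,
every `n`-vertex `K_{t+1}`-free graph has at most as many `r`-cliques as the Turán graph
`T(n,t)`. -/
theorem erdos_clique_count (n t r : ℕ) (hr : 2 ≤ r) (hrt : r ≤ t) (htn : t ≤ n)
    (G : SimpleGraph (Fin n)) (hG : G.CliqueFree (t + 1)) :
    {A : Finset (Fin n) | G.IsNClique r A}.ncard ≤
      {A : Finset (Fin n) | (turanGraph n t).IsNClique r A}.ncard :=
  erdos_clique_count_general n t r G hG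
end

section
/- Let G be a graph, let r ≥ 3, and suppose the family of vertex sets of r-cliques of G is {0,ℓ}-intersecting for some 0 < ℓ < r. Then for any edge A of the associated r-graph (i.e., any r-clique vertex set A) and any ℓ-set C ⊂ V(G) such that there is a sunflower of at least r² many r-clique vertex sets with core C, either C ⊂ A or C ∩ A = ∅. -/
/-!
Two members of the sunflower meet exactly in `C`, so each contains `C` and their petals are
disjoint; hence at most `|A \ C| ≤ r` of them meet `A \ C`. As `r² ≥ r + 2`, some member
`X ≠ A` avoids `A \ C`, and then `X ∩ A = C ∩ A`. The `{0,ℓ}`-intersection property applied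
to `X` and `A` forces `|C ∩ A| ∈ {0, ℓ}`, i.e. `C ∩ A = ∅` or `C ⊆ A`.
-/

open SimpleGraph Finset

namespace Finset

variable {α : Type*} [DecidableEq α]

def IsSunflower (S : Finset (Finset α)) (C : Finset α) : Prop :=
  (S : Set (Finset α)).Pairwise fun X Y => X ∩ Y = C

namespace IsSunflower

variable {S : Finset (Finset α)} {B C X : Finset α}

theorem core_subset (hsun : IsSunflower S C) (hS : S.Nontrivial) (hX : X ∈ S) : C ⊆ X := by
  obtain ⟨Y, hY, hYX⟩ := hS.exists_ne X
  rw [← hsun hX hY hYX.symm]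
  exact inter_subset_left

theorem card_filter_not_disjoint_le (hsun : IsSunflower S C) (hB : Disjoint C B) :
    #{X ∈ S | ¬Disjoint X B} ≤ #B := by
  refine card_le_card_of_forall_subsingleton (fun X b => b ∈ X) ?_ ?_
  · intro X hX
    obtain ⟨b, hbX, hbB⟩ := not_disjoint_iff.mp (mem_filter.mp hX).2
    exact ⟨b, hbB, hbX⟩
  · intro b hbB X ⟨hX, hbX⟩ Y ⟨hY, hbY⟩
    by_contra hXY
    have hbC : b ∈ C :=
      hsun (mem_filter.mp hX).1 (mem_filter.mp hY).1 hXY ▸ mem_inter.mpr ⟨hbX, hbY⟩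
    exact disjoint_left.mp hB hbC hbB

theorem exists_ne_disjoint (hsun : IsSunflower S C) (hB : Disjoint C B) (hS : #B + 2 ≤ #S)
    (A : Finset α) : ∃ X ∈ S, X ≠ A ∧ Disjoint X B := by
  have hcard : #(insert A {X ∈ S | ¬Disjoint X B}) < #S :=
    (card_insert_le _ _).trans_lt (by linarith [hsun.card_filter_not_disjoint_le hB])
  obtain ⟨X, hXS, hX⟩ := exists_mem_notMem_of_card_lt_card hcard
  simp only [mem_insert, mem_filter, not_or, not_and, not_not] at hX
  exact ⟨X, hXS, hX.1, hX.2 hXS⟩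

end IsSunflower

theorem inter_eq_inter_of_subset_of_disjoint_sdiff {A C X : Finset α} (hCX : C ⊆ X)
    (hX : Disjoint X (A \ C)) : X ∩ A = C ∩ A := by
  refine Subset.antisymm (fun a ha => ?_) (inter_subset_inter_right hCX)
  obtain ⟨haX, haA⟩ := mem_inter.mp ha
  by_contra haC
  exact disjoint_left.mp hX haX (mem_sdiff.mpr ⟨haA, fun h => haC (mem_inter.mpr ⟨h, haA⟩)⟩)

end Finset

theorem sunflower_core_in_or_disjoint_general {V : Type*} [DecidableEq V]
    (G : SimpleGraph V) (r ℓ : ℕ) (hr : 3 ≤ r)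
    (hinter : ∀ A B : Finset V, G.IsNClique r A → G.IsNClique r B → A ≠ B →
      (A ∩ B).card = 0 ∨ (A ∩ B).card = ℓ)
    (A : Finset V) (hA : G.IsNClique r A)
    (C : Finset V) (hC : C.card = ℓ)
    (S : Finset (Finset V)) (hS : ∀ X ∈ S, G.IsNClique r X)
    (hsun : ∀ X ∈ S, ∀ Y ∈ S, X ≠ Y → X ∩ Y = C)
    (hScard : r ^ 2 ≤ S.card) :
    C ⊆ A ∨ C ∩ A = ∅ := by
  have hsunflower : IsSunflower S C := fun X hX Y hY hXY => hsun X hX Y hY hXY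
  have hAC : #(A \ C) + 2 ≤ #S := by
    have := card_le_card (sdiff_subset : A \ C ⊆ A)
    nlinarith [hA.card_eq]
  obtain ⟨X, hXS, hXA, hXdisj⟩ := hsunflower.exists_ne_disjoint disjoint_sdiff hAC A
  have hCX : C ⊆ X := hsunflower.core_subset (one_lt_card_iff_nontrivial.mp (by omega)) hXS
  have hXA_eq := inter_eq_inter_of_subset_of_disjoint_sdiff hCX hXdisj
  rcases hXA_eq ▸ hinter X A (hS X hXS) hA hXA with h0 | hℓ
  · exact Or.inr (card_eq_zero.mp h0)
  · exact Or.inl (inter_eq_left.mp (eq_of_subset_of_card_le inter_subset_left (by omega)))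

/-- If the `r`-cliques of `G` form a `{0,ℓ}`-intersecting family (with `r ≥ 3`,
`0 < ℓ < r`), `A` is an `r`-clique vertex set and `C` is an `ℓ`-set which is the core of
a sunflower of at least `r²` many `r`-clique vertex sets, then `C ⊆ A` or `C ∩ A = ∅`. -/
theorem sunflower_core_in_or_disjoint {V : Type*} [DecidableEq V]
    (G : SimpleGraph V) (r ℓ : ℕ) (hr : 3 ≤ r) (hl0 : 0 < ℓ) (hlr : ℓ < r)
    (hinter : ∀ A B : Finset V, G.IsNClique r A → G.IsNClique r B → A ≠ B →
      (A ∩ B).card = 0 ∨ (A ∩ B).card = ℓ)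
    (A : Finset V) (hA : G.IsNClique r A)
    (C : Finset V) (hC : C.card = ℓ)
    (S : Finset (Finset V)) (hS : ∀ X ∈ S, G.IsNClique r X)
    (hsun : ∀ X ∈ S, ∀ Y ∈ S, X ≠ Y → X ∩ Y = C)
    (hScard : r ^ 2 ≤ S.card) :
    C ⊆ A ∨ C ∩ A = ∅ :=
  sunflower_core_in_or_disjoint_general G r ℓ hr hinter A hA C hC S hS hsun hScard
end

section
/- Let r ≥ 3 and 0 < ℓ < r with ℓ dividing r. Let G be a graph whose associated r-graph H is {0,ℓ}-intersecting, and suppose V(G) is partitioned into ℓ-sets C₁,...,C_m such that every edge A ∈ H is a disjoint union of some of the Cᵢ. Define an auxiliary graph G' on vertex set {C₁,...,C_m} where Cᵢ ~ Cⱼ iff Cᵢ ∪ Cⱼ ⊆ A for some A ∈ H. Then the number of (r/ℓ)-cliques in G' whose union of blocks lies in H equals |H|, and the associated (r/ℓ)-graph of G' is {0,1}-intersecting. -/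
open SimpleGraph Finset

/-- The auxiliary graph on the blocks of a partition: two blocks are adjacent iff their
union is contained in some `r`-clique of `G`. -/
def auxGraph {V : Type*} [DecidableEq V] (G : SimpleGraph V) (r : ℕ) (𝒞 : Finset (Finset V)) :
    SimpleGraph {C : Finset V // C ∈ 𝒞} :=
  SimpleGraph.fromRel (fun C C' => ∃ A : Finset V, G.IsNClique r A ∧ C.1 ∪ C'.1 ⊆ A)

/-- The reduction step: if the `r`-cliques of `G` are `{0,ℓ}`-intersecting, `ℓ ∣ r`, and
`V(G)` is partitioned into `ℓ`-blocks such that every `r`-clique is a disjoint union of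
blocks, then the `(r/ℓ)`-cliques of the auxiliary graph whose union of blocks is an
`r`-clique of `G` are in number equal to the number of `r`-cliques of `G`, and the
`(r/ℓ)`-cliques of the auxiliary graph form a `{0,1}`-intersecting family. -/
theorem aux_reduction {V : Type*} [DecidableEq V]
    (G : SimpleGraph V) (r ℓ : ℕ) (hr : 3 ≤ r) (hl0 : 0 < ℓ) (hlr : ℓ < r)
    (hdvd : ℓ ∣ r)
    (hinter : ∀ A B : Finset V, G.IsNClique r A → G.IsNClique r B → A ≠ B →
      (A ∩ B).card = 0 ∨ (A ∩ B).card = ℓ)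
    (𝒞 : Finset (Finset V))
    (hcard : ∀ C ∈ 𝒞, C.card = ℓ)
    (hdisj : ∀ C ∈ 𝒞, ∀ C' ∈ 𝒞, C ≠ C' → Disjoint C C')
    (hcover : ∀ v : V, ∃ C ∈ 𝒞, v ∈ C)
    (hunion : ∀ A : Finset V, G.IsNClique r A →
      ∃ I : Finset (Finset V), I ⊆ 𝒞 ∧ A = I.sup id) :
    {B : Finset {C : Finset V // C ∈ 𝒞} |
        (auxGraph G r 𝒞).IsNClique (r / ℓ) B ∧
          G.IsNClique r (B.sup (fun C => C.1))}.ncard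
      = {A : Finset V | G.IsNClique r A}.ncard ∧
    (∀ B B' : Finset {C : Finset V // C ∈ 𝒞},
      (auxGraph G r 𝒞).IsNClique (r / ℓ) B → (auxGraph G r 𝒞).IsNClique (r / ℓ) B' →
        B ≠ B' → (B ∩ B').card = 0 ∨ (B ∩ B').card = 1) := by
  classical
  obtain ⟨k, hk⟩ := hdvd
  have hk2 : 2 ≤ k := by
    rcases Nat.lt_or_ge k 2 with h | h
    · interval_cases k <;> omega
    · exact h
  have hrl : r / ℓ = k := by rw [hk, Nat.mul_div_cancel_left _ hl0]
  -- the unique block containing a vertex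
  have hblk : ∀ C ∈ 𝒞, ∀ C' ∈ 𝒞, ∀ v : V, v ∈ C → v ∈ C' → C = C' := by
    intro C hC C' hC' v hv hv'
    by_contra hne
    exact Finset.disjoint_left.mp (hdisj C hC C' hC' hne) hv hv'
  -- the blocks of an r-clique
  have hfilt : ∀ A : Finset V, G.IsNClique r A →
      (𝒞.filter (· ⊆ A)).sup id = A ∧ (𝒞.filter (· ⊆ A)).card = k := by
    intro A hA
    obtain ⟨I, hI𝒞, hIA⟩ := hunion A hA
    have hIfilt : I = 𝒞.filter (· ⊆ A) := by
      apply Finset.Subset.antisymm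
      · intro C hC
        refine Finset.mem_filter.mpr ⟨hI𝒞 hC, ?_⟩
        rw [hIA]; exact Finset.le_sup (f := id) hC
      · intro C hCf
        obtain ⟨hC𝒞, hCA⟩ := Finset.mem_filter.mp hCf
        have hne : C.Nonempty := Finset.card_pos.mp (by rw [hcard C hC𝒞]; exact hl0)
        obtain ⟨v, hv⟩ := hne
        have hvA : v ∈ A := hCA hv
        rw [hIA, Finset.sup_eq_biUnion] at hvA
        obtain ⟨C', hC'I, hvC'⟩ := Finset.mem_biUnion.mp hvA
        rwa [hblk C hC𝒞 C' (hI𝒞 hC'I) v hv hvC']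
    have hcardI : I.card * ℓ = r := by
      have hbi : A = I.biUnion id := by rw [hIA, Finset.sup_eq_biUnion]
      have : A.card = ∑ C ∈ I, C.card := by
        rw [hbi]
        exact Finset.card_biUnion (fun C hC C' hC' hne => hdisj C (hI𝒞 hC) C' (hI𝒞 hC') hne)
      rw [hA.2] at this
      have : r = ∑ C ∈ I, ℓ := by
        rw [this]; exact Finset.sum_congr rfl (fun C hC => hcard C (hI𝒞 hC))
      rw [this, Finset.sum_const, smul_eq_mul]
    have hIk : I.card = k := by
      have : I.card * ℓ = k * ℓ := by rw [hcardI, hk]; ring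
      exact Nat.eq_of_mul_eq_mul_right hl0 this
    rw [← hIfilt, hIk, ← hIA]
    exact ⟨rfl, rfl⟩
  -- adjacency in the auxiliary graph
  have hadj : ∀ C C' : {C : Finset V // C ∈ 𝒞}, (auxGraph G r 𝒞).Adj C C' →
      ∃ A, G.IsNClique r A ∧ C.1 ∪ C'.1 ⊆ A := by
    intro C C' h
    rw [auxGraph, SimpleGraph.fromRel_adj] at h
    rcases h.2 with ⟨A, hA, hs⟩ | ⟨A, hA, hs⟩
    · exact ⟨A, hA, hs⟩
    · exact ⟨A, hA, by rwa [Finset.union_comm]⟩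
  have hadj' : ∀ C C' : {C : Finset V // C ∈ 𝒞}, C ≠ C' →
      (∃ A, G.IsNClique r A ∧ C.1 ∪ C'.1 ⊆ A) → (auxGraph G r 𝒞).Adj C C' := by
    intro C C' hne h
    rw [auxGraph, SimpleGraph.fromRel_adj]
    exact ⟨hne, Or.inl h⟩
  -- the union of blocks of a k-clique of the aux graph is an r-clique of G
  have hsupClique : ∀ B : Finset {C : Finset V // C ∈ 𝒞},
      (auxGraph G r 𝒞).IsNClique k B → G.IsNClique r (B.sup fun C => C.1) := by
    intro B hB
    constructor
    · intro u hu v hv huv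
      rw [Finset.mem_coe, Finset.mem_sup] at hu hv
      obtain ⟨C, hCB, huC⟩ := hu
      obtain ⟨C', hC'B, hvC'⟩ := hv
      by_cases hCC : C = C'
      · subst hCC
        obtain ⟨C'', hC''B, hne⟩ :=
          Finset.exists_mem_ne (by rw [hB.2]; omega) C
        obtain ⟨A, hA, hsub⟩ := hadj C C'' (hB.1 hCB hC''B (Ne.symm hne))
        exact hA.1 (hsub (Finset.mem_union_left _ huC))
          (hsub (Finset.mem_union_left _ hvC')) huv
      · obtain ⟨A, hA, hsub⟩ := hadj C C' (hB.1 hCB hC'B hCC)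
        exact hA.1 (hsub (Finset.mem_union_left _ huC))
          (hsub (Finset.mem_union_right _ hvC')) huv
    · rw [Finset.sup_eq_biUnion,
        Finset.card_biUnion (fun C hC C' hC' hne =>
          hdisj C.1 C.2 C'.1 C'.2 (fun h => hne (Subtype.ext h)))]
      have : ∑ C ∈ B, C.1.card = ∑ C ∈ B, ℓ :=
        Finset.sum_congr rfl (fun C _ => hcard C.1 C.2)
      rw [this, Finset.sum_const, smul_eq_mul, hB.2, hk]; ring
  -- card of the block filter (attached version)
  have hcardf : ∀ A : Finset V, G.IsNClique r A →
      (𝒞.attach.filter (fun C => C.1 ⊆ A)).card = k := by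
    intro A hA
    rw [← (hfilt A hA).2]
    apply Finset.card_bij (fun C _ => C.1)
    · intro C hC
      exact Finset.mem_filter.mpr ⟨C.2, (Finset.mem_filter.mp hC).2⟩
    · intro C _ C' _ h
      exact Subtype.ext h
    · intro C hC
      obtain ⟨hC𝒞, hCA⟩ := Finset.mem_filter.mp hC
      exact ⟨⟨C, hC𝒞⟩, Finset.mem_filter.mpr ⟨Finset.mem_attach _ _, hCA⟩, rfl⟩
  -- a k-clique of the aux graph is determined by its union
  have hBdet : ∀ B : Finset {C : Finset V // C ∈ 𝒞}, (auxGraph G r 𝒞).IsNClique k B →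
      B = 𝒞.attach.filter (fun C => C.1 ⊆ B.sup (fun C => C.1)) := by
    intro B hB
    have hU := hsupClique B hB
    refine Finset.eq_of_subset_of_card_le ?_ ?_
    · intro C hC
      exact Finset.mem_filter.mpr ⟨Finset.mem_attach _ _,
        Finset.le_sup (f := fun C : {C : Finset V // C ∈ 𝒞} => C.1) hC⟩
    · rw [hcardf _ hU, hB.2]
  -- surjectivity: every r-clique comes from a k-clique of the aux graph
  have hsurj : ∀ A : Finset V, G.IsNClique r A →
      (auxGraph G r 𝒞).IsNClique k (𝒞.attach.filter fun C => C.1 ⊆ A) ∧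
        (𝒞.attach.filter fun C => C.1 ⊆ A).sup (fun C => C.1) = A := by
    intro A hA
    have hsup : (𝒞.attach.filter fun C => C.1 ⊆ A).sup (fun C => C.1) = A := by
      apply Finset.Subset.antisymm
      · intro v hv
        rw [Finset.mem_sup] at hv
        obtain ⟨C, hC, hvC⟩ := hv
        exact (Finset.mem_filter.mp hC).2 hvC
      · intro v hv
        obtain ⟨C, hC𝒞, hvC⟩ := hcover v
        have hCA : C ⊆ A := by
          have hv' : v ∈ (𝒞.filter (· ⊆ A)).sup id := by rw [(hfilt A hA).1]; exact hv
          rw [Finset.sup_eq_biUnion] at hv'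
          obtain ⟨C', hC', hvC'⟩ := Finset.mem_biUnion.mp hv'
          obtain ⟨hC'𝒞, hC'A⟩ := Finset.mem_filter.mp hC'
          rwa [hblk C hC𝒞 C' hC'𝒞 v hvC hvC']
        rw [Finset.mem_sup]
        exact ⟨⟨C, hC𝒞⟩, Finset.mem_filter.mpr ⟨Finset.mem_attach _ _, hCA⟩, hvC⟩
    refine ⟨⟨?_, hcardf A hA⟩, hsup⟩
    intro C hC C' hC' hne
    exact hadj' C C' hne
      ⟨A, hA, Finset.union_subset (Finset.mem_filter.mp hC).2 (Finset.mem_filter.mp hC').2⟩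
  rw [hrl]
  constructor
  · have himg : (fun B : Finset {C : Finset V // C ∈ 𝒞} => B.sup fun C => C.1) ''
        {B | (auxGraph G r 𝒞).IsNClique k B ∧ G.IsNClique r (B.sup fun C => C.1)}
        = {A | G.IsNClique r A} := by
      ext A
      constructor
      · rintro ⟨B, ⟨_, hB2⟩, rfl⟩
        exact hB2
      · intro hA
        exact ⟨_, ⟨(hsurj A hA).1, by rw [(hsurj A hA).2]; exact hA⟩, (hsurj A hA).2⟩
    rw [← himg]
    refine (Set.ncard_image_of_injOn ?_).symm
    intro B hB B' hB' h
    have h' : B.sup (fun C => C.1) = B'.sup (fun C => C.1) := h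
    rw [hBdet B hB.1, hBdet B' hB'.1, h']
  · intro B B' hB hB' hne
    by_contra hcon
    push_neg at hcon
    have h2 : 1 < (B ∩ B').card := by omega
    obtain ⟨C₁, h1, C₂, h2', hC12⟩ := Finset.one_lt_card.mp h2
    have hU := hsupClique B hB
    have hU' := hsupClique B' hB'
    have hsubU : C₁.1 ∪ C₂.1 ⊆ B.sup (fun C => C.1) :=
      Finset.union_subset
        (Finset.le_sup (f := fun C : {C : Finset V // C ∈ 𝒞} => C.1)
          (Finset.mem_of_mem_inter_left h1))
        (Finset.le_sup (f := fun C : {C : Finset V // C ∈ 𝒞} => C.1)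
          (Finset.mem_of_mem_inter_left h2'))
    have hsubU' : C₁.1 ∪ C₂.1 ⊆ B'.sup (fun C => C.1) :=
      Finset.union_subset
        (Finset.le_sup (f := fun C : {C : Finset V // C ∈ 𝒞} => C.1)
          (Finset.mem_of_mem_inter_right h1))
        (Finset.le_sup (f := fun C : {C : Finset V // C ∈ 𝒞} => C.1)
          (Finset.mem_of_mem_inter_right h2'))
    have hc12 : (C₁.1 ∪ C₂.1).card = ℓ + ℓ := by
      rw [Finset.card_union_of_disjoint
          (hdisj _ C₁.2 _ C₂.2 (fun h => hC12 (Subtype.ext h))),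
        hcard _ C₁.2, hcard _ C₂.2]
    have hUeq : B.sup (fun C => C.1) = B'.sup (fun C => C.1) := by
      by_contra hne'
      have hint := hinter _ _ hU hU' hne'
      have hle := Finset.card_le_card (Finset.subset_inter hsubU hsubU')
      rw [hc12] at hle
      omega
    exact hne (by rw [hBdet B hB, hBdet B' hB', hUeq])
end

section
/- Let d ≥ 1, s ≥ 1, m ≥ s, and let Ĥ(m,s,d) be the graph obtained from the Turán graph T(m,s) by replacing each vertex with a clique on d vertices (and joining cliques corresponding to adjacent vertices completely). Then the number of (sd)-cliques in Ĥ(m,s,d) equals the number of s-cliques in T(m,s), and Ĥ(m,s,d) is K_{sd+1}-free. -/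
open Finset SimpleGraph

/-- The number of `k`-cliques of a graph. -/
noncomputable def cliqueCount {V : Type*} (G : SimpleGraph V) (k : ℕ) : ℕ :=
  {A : Finset V | G.IsNClique k A}.ncard

/-- The blow-up `T̂(m,s,d)` of the Turán graph `T(m,s)` obtained by replacing each vertex
by a clique on `d` vertices and each edge by a complete bipartite graph. -/
def turanBlowup (m s d : ℕ) : SimpleGraph (Fin m × Fin d) :=
  SimpleGraph.fromRel (fun a b =>
    a.1 = b.1 ∨ (SimpleGraph.turanGraph m s).Adj a.1 b.1)

lemma blowup_adj (m s d : ℕ) (a b : Fin m × Fin d) :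
    (turanBlowup m s d).Adj a b ↔ a ≠ b ∧ (a.1 = b.1 ∨ (a.1 : ℕ) % s ≠ (b.1 : ℕ) % s) := by
  rw [turanBlowup, fromRel_adj]
  constructor
  · rintro ⟨h, h2 | h2⟩
    · exact ⟨h, h2.imp id id⟩
    · exact ⟨h, h2.imp Eq.symm Ne.symm⟩
  · rintro ⟨h, h2⟩
    exact ⟨h, Or.inl h2⟩

lemma clique_subset (m s d : ℕ) (hs : 1 ≤ s) (B : Finset (Fin m × Fin d))
    (hB : (turanBlowup m s d).IsClique B) :
    (B.image Prod.fst).card ≤ s ∧ B ⊆ (B.image Prod.fst) ×ˢ univ ∧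
      (turanGraph m s).IsClique (B.image Prod.fst : Finset (Fin m)) := by
  have key : ∀ u ∈ B.image Prod.fst, ∀ v ∈ B.image Prod.fst, u ≠ v →
      (u : ℕ) % s ≠ (v : ℕ) % s := by
    intro u hu v hv huv
    simp only [mem_image] at hu hv
    obtain ⟨a, ha, rfl⟩ := hu
    obtain ⟨b, hb, rfl⟩ := hv
    have hab : a ≠ b := fun h => huv (by rw [h])
    have := hB ha hb hab
    rw [blowup_adj] at this
    rcases this.2 with h | h
    · exact absurd h huv
    · exact h
  refine ⟨?_, ?_, fun u hu v hv huv => key u hu v hv huv⟩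
  · calc (B.image Prod.fst).card ≤ (Finset.range s).card := by
          apply card_le_card_of_injOn (fun u : Fin m => (u : ℕ) % s)
          · intro u _
            simpa [mem_range] using Nat.mod_lt _ hs
          · intro u hu v hv h
            by_contra hne
            exact key u hu v hv hne h
        _ = s := card_range s
  · intro x hx
    simp only [mem_product, mem_univ, and_true, mem_image]
    exact ⟨x, hx, rfl⟩

/-- The number of `(sd)`-cliques of the blow-up `T̂(m,s,d)` equals the number of
`s`-cliques of `T(m,s)`, and `T̂(m,s,d)` is `K_{sd+1}`-free. -/
theorem blowup_cliques (m s d : ℕ) (hd : 1 ≤ d) (hs : 1 ≤ s) (hm : s ≤ m) :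
    cliqueCount (turanBlowup m s d) (s * d) = cliqueCount (turanGraph m s) s ∧
      (turanBlowup m s d).CliqueFree (s * d + 1) := by
  constructor
  · have himg : {B : Finset (Fin m × Fin d) | (turanBlowup m s d).IsNClique (s * d) B} =
        (fun A : Finset (Fin m) => A ×ˢ (univ : Finset (Fin d))) ''
          {A | (turanGraph m s).IsNClique s A} := by
      ext B
      simp only [Set.mem_setOf_eq, Set.mem_image]
      constructor
      · rintro ⟨hcl, hcard⟩
        obtain ⟨h1, h2, h3⟩ := clique_subset m s d hs B hcl
        have hcard2 : ((B.image Prod.fst) ×ˢ (univ : Finset (Fin d))).card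
            = (B.image Prod.fst).card * d := by simp [card_product]
        have hle : s * d ≤ (B.image Prod.fst).card * d := by
          rw [← hcard, ← hcard2]; exact card_le_card h2
        have hAs : (B.image Prod.fst).card = s :=
          le_antisymm h1 (Nat.le_of_mul_le_mul_right hle hd)
        have hBeq : B = (B.image Prod.fst) ×ˢ univ :=
          eq_of_subset_of_card_le h2 (by rw [hcard2, hAs, hcard])
        exact ⟨B.image Prod.fst, ⟨h3, hAs⟩, hBeq.symm⟩
      · rintro ⟨A, ⟨hAcl, hAcard⟩, rfl⟩
        refine ⟨?_, by simp [card_product, hAcard]⟩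
        intro a ha b hb hab
        simp only [coe_product, Set.mem_prod] at ha hb
        rw [blowup_adj]
        refine ⟨hab, ?_⟩
        by_cases h : a.1 = b.1
        · exact Or.inl h
        · exact Or.inr (hAcl ha.1 hb.1 h)
    rw [cliqueCount, cliqueCount, himg, Set.ncard_image_of_injOn]
    intro A _ A' _ h
    simp only at h
    ext u
    have hi : (0 : ℕ) < d := hd
    have := Finset.ext_iff.mp h (u, ⟨0, hi⟩)
    simpa [mem_product] using this
  · intro B hB
    obtain ⟨h1, h2, _⟩ := clique_subset m s d hs B hB.1
    have hle : B.card ≤ s * d := by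
      refine (card_le_card h2).trans ?_
      rw [card_product, card_univ, Fintype.card_fin]
      exact Nat.mul_le_mul_right d h1
    rw [hB.2] at hle
    omega
end

section
/- Let r > t ≥ 1. Let G be a graph and T a (t+1)-subset of V(G) inducing a clique. Let N be the set of common neighbors of all vertices of T. If the family of vertex sets of r-cliques of G is t-intersecting (any two distinct r-cliques share at least t vertices), then the family of vertex sets of (r-t)-cliques of the induced subgraph G[N] is 1-intersecting (any two distinct (r-t)-cliques of G[N] share at least one vertex). -/
/-!
Extend two distinct `(r-t)`-cliques `A`, `B` of `G[N]` by `T` minus two different vertices `x ≠ y`: `A ∪ (T \ {x})` and `B ∪ (T \ {y})` are distinct `r`-cliques of `G` (only the second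
contains `x`), so they share at least `t` vertices. Since `A`, `B` avoid `T`, these lie in
`A ∩ B` or in `T \ {x, y}`, which has only `t - 1` elements.
-/

open Finset SimpleGraph

namespace SimpleGraph

variable {V : Type*} {G : SimpleGraph V}

theorem IsClique.union_of_isCompleteBetween {s u : Set V} (hs : G.IsClique s)
    (hu : G.IsClique u) (hsu : G.IsCompleteBetween s u) : G.IsClique (s ∪ u) := by
  rintro a (ha | ha) b (hb | hb) hab
  · exact hs ha hb hab
  · exact hsu ha hb
  · exact (hsu hb ha).symm
  · exact hu ha hb hab

theorem IsNClique.union_of_isCompleteBetween [DecidableEq V] {m n : ℕ} {s u : Finset V}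
    (hs : G.IsNClique m s) (hu : G.IsNClique n u) (hsu : G.IsCompleteBetween s u) :
    G.IsNClique (m + n) (s ∪ u) where
  isClique := by
    rw [coe_union]
    exact hs.isClique.union_of_isCompleteBetween hu.isClique hsu
  card_eq := by
    rw [card_union_of_disjoint (disjoint_coe.1 hsu.disjoint), hs.card_eq, hu.card_eq]

end SimpleGraph

namespace Finset

variable {α : Type*} [DecidableEq α]

theorem card_union_inter_union_le {s s' u u' : Finset α} (hsu' : Disjoint s u')
    (hs'u : Disjoint s' u) : #((s ∪ u) ∩ (s' ∪ u')) ≤ #(s ∩ s') + #(u ∩ u') :=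
  calc #((s ∪ u) ∩ (s' ∪ u')) ≤ #(s ∩ s' ∪ u ∩ u') := by
        refine card_le_card fun v hv => ?_
        have : v ∈ s → v ∉ u' := fun h => disjoint_left.1 hsu' h
        have : v ∈ s' → v ∉ u := fun h => disjoint_left.1 hs'u h
        grind
    _ ≤ #(s ∩ s') + #(u ∩ u') := card_union_le _ _

theorem card_erase_inter_erase_add_two {s : Finset α} {x y : α} (hxy : x ≠ y) (hx : x ∈ s)
    (hy : y ∈ s) : #(s.erase x ∩ s.erase y) + 2 = #s := by
  rw [erase_inter, inter_eq_right.2 (erase_subset y s),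
    card_erase_of_mem (mem_erase.2 ⟨hxy, hx⟩), card_erase_of_mem hy]
  have : 2 ≤ #s := one_lt_card.2 ⟨x, hx, y, hy, hxy⟩
  omega

end Finset

theorem induced_one_intersecting_general {V : Type*} [DecidableEq V] (G : SimpleGraph V)
    (r t : ℕ) (ht : 1 ≤ t)
    (T : Finset V) (hT : G.IsNClique (t + 1) T)
    (hinter : ∀ A B : Finset V, G.IsNClique r A → G.IsNClique r B → A ≠ B →
      t ≤ (A ∩ B).card)
    (N : Set V) (hN : N = {v : V | ∀ u ∈ T, G.Adj u v}) :
    ∀ A B : Finset V, ↑A ⊆ N → ↑B ⊆ N →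
      G.IsNClique (r - t) A → G.IsNClique (r - t) B → A ≠ B →
        1 ≤ (A ∩ B).card := by
  intro A B hAN hBN hA hB hAB
  subst hN
  have htr : t < r := by
    by_contra! hrt
    rw [Nat.sub_eq_zero_of_le hrt, isNClique_zero] at hA hB
    exact hAB (hA.trans hB.symm)
  have complete_to_T {C : Finset V} (hC : ↑C ⊆ {v | ∀ u ∈ T, G.Adj u v}) :
      G.IsCompleteBetween C T :=
    fun v hv u hu => (hC hv u hu).symm
  have big_clique {C : Finset V} (hC : ↑C ⊆ {v | ∀ u ∈ T, G.Adj u v})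
      (hCr : G.IsNClique (r - t) C) {z : V} (hz : z ∈ T) : G.IsNClique r (C ∪ T.erase z) := by
    have := hCr.union_of_isCompleteBetween (hT.erase_of_mem hz)
      fun v hv u hu => complete_to_T hC hv (mem_of_mem_erase hu)
    rwa [Nat.add_sub_cancel, Nat.sub_add_cancel htr.le] at this
  have hAT := disjoint_coe.1 (complete_to_T hAN).disjoint
  have hBT := disjoint_coe.1 (complete_to_T hBN).disjoint
  obtain ⟨x, hx, y, hy, hxy⟩ := one_lt_card.1 (by rw [hT.card_eq]; omega : 1 < #T)
  have hne : A ∪ T.erase x ≠ B ∪ T.erase y := fun h => by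
    have : x ∈ A ∪ T.erase x := h ▸ mem_union_right _ (mem_erase.2 ⟨hxy, hx⟩)
    simp [disjoint_right.1 hAT hx] at this
  have h_t_le := hinter _ _ (big_clique hAN hA hx) (big_clique hBN hB hy) hne
  have h_le := card_union_inter_union_le (hAT.mono_right (erase_subset y T))
    (hBT.mono_right (erase_subset x T))
  have h_TT := card_erase_inter_erase_add_two hxy hx hy
  rw [hT.card_eq] at h_TT
  omega

/-- If the `r`-cliques of `G` are `t`-intersecting and `T` is a `(t+1)`-clique with common
neighborhood `N`, then the `(r-t)`-cliques of the induced subgraph `G[N]` are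
`1`-intersecting. -/
theorem induced_one_intersecting {V : Type*} [DecidableEq V] (G : SimpleGraph V)
    (r t : ℕ) (ht : 1 ≤ t) (htr : t < r)
    (T : Finset V) (hT : G.IsNClique (t + 1) T)
    (hinter : ∀ A B : Finset V, G.IsNClique r A → G.IsNClique r B → A ≠ B →
      t ≤ (A ∩ B).card)
    (N : Set V) (hN : N = {v : V | ∀ u ∈ T, G.Adj u v}) :
    ∀ A B : Finset V, ↑A ⊆ N → ↑B ⊆ N →
      G.IsNClique (r - t) A → G.IsNClique (r - t) B → A ≠ B →
        1 ≤ (A ∩ B).card :=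
  induced_one_intersecting_general G r t ht T hT hinter N hN
end

section
/- Let G be a graph, D ⊆ V(G) with |D| = t+2 inducing a clique, and suppose every r-clique A of G satisfies |A ∩ D| ≥ t+1. For each (t+1)-subset Tᵢ of D let Nⁱ be the set of common neighbors of Tᵢ outside D, and let N⁰ be the set of common neighbors of all of D outside D. Then N(K_r, G) ≤ N(K_{r-t-2}, G[N⁰]) + Σᵢ N(K_{r-t-1}, G[Nⁱ]), where the sum is over all t+2 many (t+1)-subsets Tᵢ of D. -/
open Finset SimpleGraph

/-!
Sort the `r`-cliques `A` by their trace `A ∩ D`; by hypothesis the trace is either `D` or one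
of its `(t+1)`-subsets. A clique with trace `T` is determined by `A \ D`, which is a clique of
size `r - #T` outside `D` whose vertices are all adjacent to every vertex of `T`.
-/

namespace SimpleGraph

variable {V : Type*} [DecidableEq V] (G : SimpleGraph V)

lemma isNClique_sdiff_of_inter_eq {n : ℕ} {A D T : Finset V} (hA : G.IsNClique n A)
    (hAD : A ∩ D = T) :
    G.IsNClique (n - #T) (A \ D) ∧ ∀ v ∈ A \ D, v ∉ D ∧ ∀ u ∈ T, G.Adj u v := by
  have hTA : T ⊆ A := hAD ▸ inter_subset_left
  refine ⟨⟨hA.isClique.subset (by simp), ?_⟩, fun v hv ↦ ?_⟩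
  · rw [← hA.card_eq, ← hAD, inter_comm, ← card_sdiff]
  · obtain ⟨hvA, hvD⟩ := mem_sdiff.mp hv
    have hTD : T ⊆ D := hAD ▸ inter_subset_right
    exact ⟨hvD, fun u hu ↦ hA.isClique (hTA hu) hvA (by rintro rfl; exact hvD (hTD hu))⟩

variable [Finite V]

lemma ncard_isNClique_inter_eq_le (n : ℕ) (D T : Finset V) :
    {A : Finset V | G.IsNClique n A ∧ A ∩ D = T}.ncard ≤
      {B : Finset V | G.IsNClique (n - #T) B ∧ ∀ v ∈ B, v ∉ D ∧ ∀ u ∈ T, G.Adj u v}.ncard := by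
  refine Set.ncard_le_ncard_of_injOn (· \ D)
    (fun A ⟨hA, hAD⟩ ↦ G.isNClique_sdiff_of_inter_eq hA hAD) ?_
  rintro A ⟨-, hAD⟩ B ⟨-, hBD⟩ hAB
  rw [← sdiff_union_inter A D, ← sdiff_union_inter B D, hAD, hBD]
  exact congrArg (· ∪ T) hAB

end SimpleGraph

theorem clique_decomposition_bound_general {V : Type*} [Fintype V] [DecidableEq V]
    (G : SimpleGraph V) (r t : ℕ)
    (D : Finset V) (hD : D.card = t + 2)
    (hA : ∀ A : Finset V, G.IsNClique r A → t + 1 ≤ (A ∩ D).card) :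
    {A : Finset V | G.IsNClique r A}.ncard ≤
      {A : Finset V | G.IsNClique (r - t - 2) A ∧
        ∀ v ∈ A, v ∉ D ∧ ∀ u ∈ D, G.Adj u v}.ncard +
      ∑ T ∈ D.powersetCard (t + 1),
        {A : Finset V | G.IsNClique (r - t - 1) A ∧
          ∀ v ∈ A, v ∉ D ∧ ∀ u ∈ T, G.Adj u v}.ncard := by
  let traceEq (T : Finset V) := {A : Finset V | G.IsNClique r A ∧ A ∩ D = T}
  have hcover : {A : Finset V | G.IsNClique r A} ⊆
      traceEq D ∪ ⋃ T ∈ D.powersetCard (t + 1), traceEq T := by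
    intro A hAr
    have hle : #(A ∩ D) ≤ t + 2 := hD ▸ card_le_card inter_subset_right
    rcases (hA A hAr).eq_or_lt with hcard | hcard
    · exact Or.inr (Set.mem_biUnion (mem_powersetCard.mpr ⟨inter_subset_right, hcard.symm⟩)
        ⟨hAr, rfl⟩)
    · exact Or.inl ⟨hAr, eq_of_subset_of_card_le inter_subset_right (by omega)⟩
  calc {A : Finset V | G.IsNClique r A}.ncard
      ≤ (traceEq D).ncard + ∑ T ∈ D.powersetCard (t + 1), (traceEq T).ncard :=
        (Set.ncard_le_ncard hcover).trans <| (Set.ncard_union_le _ _).trans <|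
          Nat.add_le_add_left (set_ncard_biUnion_le _ _) _
    _ ≤ _ := by
        refine Nat.add_le_add ?_ (sum_le_sum fun T hT ↦ ?_)
        · simpa only [hD, Nat.sub_sub] using G.ncard_isNClique_inter_eq_le r D D
        · simpa only [(mem_powersetCard.mp hT).2, Nat.sub_sub] using
            G.ncard_isNClique_inter_eq_le r D T

/-- The decomposition bound: if `D` is a `(t+2)`-set inducing a clique and every
`r`-clique `A` of `G` satisfies `|A ∩ D| ≥ t+1`, then the number of `r`-cliques of `G` is
at most the number of `(r-t-2)`-cliques inside the common neighborhood `N⁰` of `D` plus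
the sum over the `(t+1)`-subsets `T` of `D` of the number of `(r-t-1)`-cliques inside the
common neighborhood `N^T` of `T` (both neighborhoods taken outside `D`). -/
theorem clique_decomposition_bound {V : Type*} [Fintype V] [DecidableEq V]
    (G : SimpleGraph V) (r t : ℕ)
    (D : Finset V) (hD : D.card = t + 2) (hDclique : G.IsClique ↑D)
    (hA : ∀ A : Finset V, G.IsNClique r A → t + 1 ≤ (A ∩ D).card) :
    {A : Finset V | G.IsNClique r A}.ncard ≤
      {A : Finset V | G.IsNClique (r - t - 2) A ∧
        ∀ v ∈ A, v ∉ D ∧ ∀ u ∈ D, G.Adj u v}.ncard +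
      ∑ T ∈ D.powersetCard (t + 1),
        {A : Finset V | G.IsNClique (r - t - 1) A ∧
          ∀ v ∈ A, v ∉ D ∧ ∀ u ∈ T, G.Adj u v}.ncard :=
  clique_decomposition_bound_general G r t D hD hA
end

section
/- Let T be a family of (t+1)-element subsets of a set V such that T is t-intersecting (any two distinct members share at least t elements), |T| ≥ 3, and there exist T₁, T₂, T₃ ∈ T with T₁ ∩ T₂ ≠ T₁ ∩ T₃. Then every member of T is a subset of D := T₁ ∪ T₂, where |D| = t+2; consequently |T| ≤ t+2, and if |T| ≥ t+2 then T equals the family of all (t+1)-subsets of D. -/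
open Finset

/-- If `T` is a `t`-intersecting family of `(t+1)`-sets with `|T| ≥ 3` containing three
distinct members `T₁, T₂, T₃` with `T₁ ∩ T₂ ≠ T₁ ∩ T₃`, then every member of `T` is a
subset of `D := T₁ ∪ T₂`, `|D| = t + 2`, hence `|T| ≤ t + 2`, and if `|T| ≥ t + 2` then
`T` consists of all `(t+1)`-subsets of `D`. -/
theorem t_intersecting_structure {V : Type*} [DecidableEq V] (t : ℕ)
    (𝒯 : Finset (Finset V))
    (hcard : ∀ A ∈ 𝒯, A.card = t + 1)
    (hinter : ∀ A ∈ 𝒯, ∀ B ∈ 𝒯, A ≠ B → t ≤ (A ∩ B).card)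
    (h3 : 3 ≤ 𝒯.card)
    (T₁ T₂ T₃ : Finset V) (hT₁ : T₁ ∈ 𝒯) (hT₂ : T₂ ∈ 𝒯) (hT₃ : T₃ ∈ 𝒯)
    (h12 : T₁ ≠ T₂) (h13 : T₁ ≠ T₃) (h23 : T₂ ≠ T₃)
    (hne : T₁ ∩ T₂ ≠ T₁ ∩ T₃) :
    (∀ A ∈ 𝒯, A ⊆ T₁ ∪ T₂) ∧ (T₁ ∪ T₂).card = t + 2 ∧ 𝒯.card ≤ t + 2 ∧
      (t + 2 ≤ 𝒯.card → 𝒯 = (T₁ ∪ T₂).powersetCard (t + 1)) := by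
  -- distinct members intersect in exactly t elements
  have hint : ∀ A ∈ 𝒯, ∀ B ∈ 𝒯, A ≠ B → (A ∩ B).card = t := by
    intro A hA B hB hAB
    have h1 : (A ∩ B).card ≤ t + 1 := by
      calc (A ∩ B).card ≤ A.card := card_le_card inter_subset_left
        _ = t + 1 := hcard A hA
    have h2 : t ≤ (A ∩ B).card := hinter A hA B hB hAB
    rcases Nat.lt_or_ge (A ∩ B).card (t + 1) with h | h
    · omega
    · exfalso
      have hAB' : A ∩ B = A := by
        apply eq_of_subset_of_card_le inter_subset_left
        rw [hcard A hA]; exact h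
      have hsub : A ⊆ B := by rw [← hAB']; exact inter_subset_right
      exact hAB (eq_of_subset_of_card_le hsub (by rw [hcard A hA, hcard B hB]))
  have hD : (T₁ ∪ T₂).card = t + 2 := by
    have := card_union_add_card_inter T₁ T₂
    rw [hcard T₁ hT₁, hcard T₂ hT₂, hint T₁ hT₁ T₂ hT₂ h12] at this
    omega
  -- key lemma: if A ∩ T₁ ≠ A ∩ T₂ then A ⊆ T₁ ∪ T₂
  have key : ∀ A ∈ 𝒯, A ∩ T₁ ≠ A ∩ T₂ → A ⊆ T₁ ∪ T₂ := by
    intro A hA hd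
    rcases eq_or_ne A T₁ with rfl | hA1
    · exact subset_union_left
    rcases eq_or_ne A T₂ with rfl | hA2
    · exact subset_union_right
    have hc1 : (A ∩ T₁).card = t := hint A hA T₁ hT₁ hA1
    have hc2 : (A ∩ T₂).card = t := hint A hA T₂ hT₂ hA2
    have hic : ((A ∩ T₁) ∩ (A ∩ T₂)).card < t := by
      rcases Nat.lt_or_ge ((A ∩ T₁) ∩ (A ∩ T₂)).card t with h | h
      · exact h
      · exfalso
        have e1 : (A ∩ T₁) ∩ (A ∩ T₂) = A ∩ T₁ := by
          apply eq_of_subset_of_card_le inter_subset_left; omega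
        have e2 : A ∩ T₁ ⊆ A ∩ T₂ := by rw [← e1]; exact inter_subset_right
        exact hd (eq_of_subset_of_card_le e2 (by omega))
    have hu : t + 1 ≤ ((A ∩ T₁) ∪ (A ∩ T₂)).card := by
      have := card_union_add_card_inter (A ∩ T₁) (A ∩ T₂)
      omega
    have he : (A ∩ T₁) ∪ (A ∩ T₂) = A ∩ (T₁ ∪ T₂) := (inter_union_distrib_left A T₁ T₂).symm
    rw [he] at hu
    have : A ∩ (T₁ ∪ T₂) = A := by
      apply eq_of_subset_of_card_le inter_subset_left
      rw [hcard A hA]; exact hu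
    exact inter_eq_left.mp this
  -- T₃ ⊆ T₁ ∪ T₂
  have h3sub : T₃ ⊆ T₁ ∪ T₂ := by
    apply key T₃ hT₃
    intro h
    apply hne
    have e1 : T₃ ∩ T₁ ⊆ T₁ ∩ T₂ := by
      intro x hx
      rw [mem_inter] at *
      have hx2 : x ∈ T₃ ∩ T₂ := by rw [← h]; exact mem_inter.mpr hx
      rw [mem_inter] at hx2
      exact ⟨hx.2, hx2.2⟩
    have e2 : T₁ ∩ T₂ = T₃ ∩ T₁ := by
      apply (eq_of_subset_of_card_le e1 _).symm
      rw [hint T₁ hT₁ T₂ hT₂ h12, hint T₃ hT₃ T₁ hT₁ (Ne.symm h13)]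
    rw [e2, inter_comm]
  -- main claim
  have hmain : ∀ A ∈ 𝒯, A ⊆ T₁ ∪ T₂ := by
    intro A hA
    rcases eq_or_ne A T₁ with rfl | hA1
    · exact subset_union_left
    rcases eq_or_ne A T₂ with rfl | hA2
    · exact subset_union_right
    rcases eq_or_ne (A ∩ T₁) (A ∩ T₂) with h | h
    · exfalso
      -- then A ∩ T₁ = T₁ ∩ T₂
      have e1 : A ∩ T₁ ⊆ T₁ ∩ T₂ := by
        intro x hx
        rw [mem_inter] at *
        have hx2 : x ∈ A ∩ T₂ := by rw [← h]; exact mem_inter.mpr hx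
        rw [mem_inter] at hx2
        exact ⟨hx.2, hx2.2⟩
      have e2 : A ∩ T₁ = T₁ ∩ T₂ := by
        apply eq_of_subset_of_card_le e1
        rw [hint T₁ hT₁ T₂ hT₂ h12, hint A hA T₁ hT₁ hA1]
      have hA3 : A ≠ T₃ := by
        rintro rfl
        exact hne (by rw [← e2, inter_comm])
      -- A ∩ T₃ ⊆ (T₁ ∩ T₂) ∩ (T₁ ∩ T₃)
      have hsub : A ∩ T₃ ⊆ (T₁ ∩ T₂) ∩ (T₁ ∩ T₃) := by
        intro x hx
        rw [mem_inter] at hx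
        have hx12 : x ∈ T₁ ∪ T₂ := h3sub hx.2
        have hxA1 : x ∈ T₁ ∩ T₂ := by
          rw [← e2, mem_inter]
          rcases mem_union.mp hx12 with h' | h'
          · exact ⟨hx.1, h'⟩
          · have : x ∈ A ∩ T₂ := mem_inter.mpr ⟨hx.1, h'⟩
            rw [← h, mem_inter] at this
            exact ⟨hx.1, this.2⟩
        rw [mem_inter] at hxA1 ⊢
        exact ⟨mem_inter.mpr hxA1, mem_inter.mpr ⟨hxA1.1, hx.2⟩⟩
      have h1 : t ≤ (A ∩ T₃).card := hinter A hA T₃ hT₃ hA3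
      have h2 : t ≤ ((T₁ ∩ T₂) ∩ (T₁ ∩ T₃)).card :=
        le_trans h1 (card_le_card hsub)
      -- but T₁ ∩ T₂ and T₁ ∩ T₃ are distinct t-subsets of T₁ of card t
      have hu : ((T₁ ∩ T₂) ∪ (T₁ ∩ T₃)).card ≤ t + 1 := by
        have : (T₁ ∩ T₂) ∪ (T₁ ∩ T₃) ⊆ T₁ :=
          union_subset inter_subset_left inter_subset_left
        calc ((T₁ ∩ T₂) ∪ (T₁ ∩ T₃)).card ≤ T₁.card := card_le_card this
          _ = t + 1 := hcard T₁ hT₁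
      have hlt : t + 1 ≤ ((T₁ ∩ T₂) ∪ (T₁ ∩ T₃)).card := by
        have hcu := card_union_add_card_inter (T₁ ∩ T₂) (T₁ ∩ T₃)
        rw [hint T₁ hT₁ T₂ hT₂ h12, hint T₁ hT₁ T₃ hT₃ h13] at hcu
        rcases Nat.lt_or_ge (((T₁ ∩ T₂) ∩ (T₁ ∩ T₃)).card) t with h' | h'
        · omega
        · exfalso
          have e3 : (T₁ ∩ T₂) ∩ (T₁ ∩ T₃) = T₁ ∩ T₂ := by
            apply eq_of_subset_of_card_le inter_subset_left
            rw [hint T₁ hT₁ T₂ hT₂ h12]; exact h'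
          have e4 : T₁ ∩ T₂ ⊆ T₁ ∩ T₃ := by rw [← e3]; exact inter_subset_right
          exact hne (eq_of_subset_of_card_le e4
            (by rw [hint T₁ hT₁ T₂ hT₂ h12, hint T₁ hT₁ T₃ hT₃ h13]))
      have hcu := card_union_add_card_inter (T₁ ∩ T₂) (T₁ ∩ T₃)
      rw [hint T₁ hT₁ T₂ hT₂ h12, hint T₁ hT₁ T₃ hT₃ h13] at hcu
      omega
    · exact key A hA h
  -- conclusion
  have hPsub : 𝒯 ⊆ (T₁ ∪ T₂).powersetCard (t + 1) := by
    intro A hA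
    rw [mem_powersetCard]
    exact ⟨hmain A hA, hcard A hA⟩
  have hPcard : ((T₁ ∪ T₂).powersetCard (t + 1)).card = t + 2 := by
    rw [card_powersetCard, hD]
    exact Nat.choose_succ_self_right (t + 1)
  refine ⟨hmain, hD, ?_, ?_⟩
  · calc 𝒯.card ≤ ((T₁ ∪ T₂).powersetCard (t + 1)).card := card_le_card hPsub
      _ = t + 2 := hPcard
  · intro h
    exact eq_of_subset_of_card_le hPsub (by omega)
end
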